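/- arXiv:2509.04861 — 7 statements merged into one kernel-verified Lean document; each statement's English description precedes it below -/
import Mathlib

section
/- Let a ≥ 1, ρ > 0, and let λ_n = √(n² + ξ_n) where ξ_n ∈ [0,1] for every n ∈ ℤ and ξ_0 > 0. Let w, w̄ : ℤ → ℂ satisfy ‖w‖_{a,ρ} < ∞ and ‖w̄‖_{a,ρ} < ∞, set q_n := w_n + w̄_n, and define v_n := (n²/(4λ_n)) · q_n · Σ_{m∈ℤ} (m²/(4λ_m)) q_m² (the gradient in w̄_n of the Kirchhoff quartic G¹(w,w̄) = (1/16) Σ_{n,m} (n²m²/(λ_nλ_m)) (w_n+w̄_n)²(w_m+w̄_m)²). Then Σ_{n∈ℤ} |v_n| · max(|n|,1)^{a−1} · e^{|n|ρ} ≤ (1/16) (‖w‖_{a,ρ} + ‖w̄‖_{a,ρ})³. In particular the gradient of G¹ maps l¹_{a,ρ} × l¹_{a,ρ} into l¹_{a−1,ρ} with cubic bound. -/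
/-- The weight of the paper's space `l¹_{a,ρ}`: `max(|n|,1)^a · e^{|n|ρ}`. -/
noncomputable def lweight (a ρ : ℝ) (n : ℤ) : ℝ :=
  (max |(n : ℝ)| 1) ^ a * Real.exp (|(n : ℝ)| * ρ)

/-- The weighted ℓ¹ norm `‖p‖_{a,ρ}`. -/
noncomputable def wnorm (a ρ : ℝ) (p : ℤ → ℂ) : ℝ :=
  ∑' n : ℤ, norm (p n) * lweight a ρ n

/-!
Write `q = w + w̄`, `c_n = n² / (4 λ_n)` (`kirchhoffCoeff`) and
`A_n = |q_n| max(|n|,1)^a e^{|n|ρ}`, so that `Σ A_n ≤ ‖w‖_{a,ρ} + ‖w̄‖_{a,ρ}`. Since `λ_n ≥ |n|`,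
`c_n ≤ |n|/4`: the factor `c_n` costs one power of `max(|n|,1)`, i.e. it turns the weight of
exponent `a - 1` into that of exponent `a`; and since the weights are `≥ 1`, `|q_n| ≤ A_n`.
Hence `|c_m q_m²| ≤ A_m (Σ A)/4`, so the inner sum has modulus at most `(Σ A)²/4`, and the
`(a-1)`-weighted modulus of `v_n` is at most `A_n (Σ A)²/16`.
-/

noncomputable def kirchhoffCoeff (ξ : ℤ → ℝ) (n : ℤ) : ℝ :=
  (n : ℝ) ^ 2 / (4 * Real.sqrt ((n : ℝ) ^ 2 + ξ n))

lemma lweight_nonneg (a ρ : ℝ) (n : ℤ) : 0 ≤ lweight a ρ n := by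
  unfold lweight; positivity

lemma one_le_lweight {a ρ : ℝ} (ha : 0 ≤ a) (hρ : 0 ≤ ρ) (n : ℤ) : 1 ≤ lweight a ρ n :=
  one_le_mul_of_one_le_of_one_le (Real.one_le_rpow (le_max_right _ _) ha)
    (Real.one_le_exp (mul_nonneg (abs_nonneg _) hρ))

lemma lweight_sub_one_mul (a ρ : ℝ) (n : ℤ) :
    lweight (a - 1) ρ n * max |(n : ℝ)| 1 = lweight a ρ n := by
  have hM : max |(n : ℝ)| 1 ≠ 0 := by positivity
  rw [lweight, lweight, mul_right_comm, ← Real.rpow_add_one hM, sub_add_cancel]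

lemma norm_le_norm_mul_lweight {a ρ : ℝ} (ha : 0 ≤ a) (hρ : 0 ≤ ρ) (z : ℂ) (n : ℤ) :
    ‖z‖ ≤ ‖z‖ * lweight a ρ n :=
  le_mul_of_one_le_right (norm_nonneg z) (one_le_lweight ha hρ n)

lemma wnorm_nonneg (a ρ : ℝ) (p : ℤ → ℂ) : 0 ≤ wnorm a ρ p :=
  tsum_nonneg fun n => mul_nonneg (norm_nonneg _) (lweight_nonneg a ρ n)

lemma norm_add_mul_lweight_le (a ρ : ℝ) (z z' : ℂ) (n : ℤ) :
    ‖z + z'‖ * lweight a ρ n ≤ ‖z‖ * lweight a ρ n + ‖z'‖ * lweight a ρ n := by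
  rw [← add_mul]
  exact mul_le_mul_of_nonneg_right (norm_add_le z z') (lweight_nonneg a ρ n)

lemma summable_norm_add_mul_lweight {a ρ : ℝ} {p r : ℤ → ℂ}
    (hp : Summable fun n => ‖p n‖ * lweight a ρ n)
    (hr : Summable fun n => ‖r n‖ * lweight a ρ n) :
    Summable fun n => ‖p n + r n‖ * lweight a ρ n :=
  .of_nonneg_of_le (fun n => mul_nonneg (norm_nonneg _) (lweight_nonneg a ρ n))
    (fun n => norm_add_mul_lweight_le a ρ _ _ n) (hp.add hr)

lemma wnorm_add_le {a ρ : ℝ} {p r : ℤ → ℂ}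
    (hp : Summable fun n => ‖p n‖ * lweight a ρ n)
    (hr : Summable fun n => ‖r n‖ * lweight a ρ n) :
    wnorm a ρ (fun n => p n + r n) ≤ wnorm a ρ p + wnorm a ρ r := by
  rw [wnorm, wnorm, wnorm, ← hp.tsum_add hr]
  exact (summable_norm_add_mul_lweight hp hr).tsum_le_tsum
    (fun n => norm_add_mul_lweight_le a ρ _ _ n) (hp.add hr)

lemma norm_mul_lweight_le_wnorm {a ρ : ℝ} {p : ℤ → ℂ}
    (hp : Summable fun n => ‖p n‖ * lweight a ρ n) (n : ℤ) :
    ‖p n‖ * lweight a ρ n ≤ wnorm a ρ p :=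
  hp.le_tsum n fun m _ => mul_nonneg (norm_nonneg _) (lweight_nonneg a ρ m)

section KirchhoffCoeff

variable {ξ : ℤ → ℝ} {n : ℤ}

lemma kirchhoffCoeff_nonneg (ξ : ℤ → ℝ) (n : ℤ) : 0 ≤ kirchhoffCoeff ξ n := by
  unfold kirchhoffCoeff; positivity

lemma kirchhoffCoeff_le_abs (hξ : 0 ≤ ξ n) : kirchhoffCoeff ξ n ≤ |(n : ℝ)| / 4 := by
  have hsqrt : |(n : ℝ)| ≤ Real.sqrt ((n : ℝ) ^ 2 + ξ n) := by
    rw [← Real.sqrt_sq_eq_abs]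
    exact Real.sqrt_le_sqrt (by linarith)
  refine div_le_of_le_mul₀ (by positivity) (by positivity) ?_
  nlinarith [sq_abs (n : ℝ), abs_nonneg (n : ℝ)]

lemma kirchhoffCoeff_mul_lweight_sub_one_le (hξ : 0 ≤ ξ n) (a ρ : ℝ) :
    kirchhoffCoeff ξ n * lweight (a - 1) ρ n ≤ lweight a ρ n / 4 := by
  calc kirchhoffCoeff ξ n * lweight (a - 1) ρ n
      ≤ max |(n : ℝ)| 1 / 4 * lweight (a - 1) ρ n :=
        mul_le_mul_of_nonneg_right ((kirchhoffCoeff_le_abs hξ).trans (by gcongr; exact le_max_left _ _))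
          (lweight_nonneg _ _ _)
    _ = lweight a ρ n / 4 := by rw [← lweight_sub_one_mul a ρ n]; ring

lemma kirchhoffCoeff_le_lweight (hξ : 0 ≤ ξ n) {a ρ : ℝ} (ha : 1 ≤ a) (hρ : 0 ≤ ρ) :
    kirchhoffCoeff ξ n ≤ lweight a ρ n / 4 :=
  (le_mul_of_one_le_right (kirchhoffCoeff_nonneg ξ n)
    (one_le_lweight (sub_nonneg.mpr ha) hρ n)).trans (kirchhoffCoeff_mul_lweight_sub_one_le hξ a ρ)

end KirchhoffCoeff

section Gradient

variable {a ρ : ℝ} {ξ : ℤ → ℝ} {q : ℤ → ℂ}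

lemma norm_kirchhoffCoeff_mul_sq_le (hξ : ∀ n, 0 ≤ ξ n) (ha : 1 ≤ a) (hρ : 0 ≤ ρ)
    (hq : Summable fun n => ‖q n‖ * lweight a ρ n) (n : ℤ) :
    ‖(kirchhoffCoeff ξ n : ℂ) * q n ^ 2‖ ≤ wnorm a ρ q / 4 * (‖q n‖ * lweight a ρ n) := by
  rw [norm_mul, norm_pow, Complex.norm_real, Real.norm_of_nonneg (kirchhoffCoeff_nonneg ξ n)]
  calc kirchhoffCoeff ξ n * ‖q n‖ ^ 2
      ≤ lweight a ρ n / 4 * ‖q n‖ * ‖q n‖ := by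
        rw [sq, ← mul_assoc]; gcongr; exact kirchhoffCoeff_le_lweight (hξ n) ha hρ
    _ ≤ lweight a ρ n / 4 * ‖q n‖ * wnorm a ρ q := by
        gcongr
        · exact mul_nonneg (div_nonneg (lweight_nonneg _ _ _) (by norm_num)) (norm_nonneg _)
        · exact (norm_le_norm_mul_lweight (by linarith) hρ _ n).trans
            (norm_mul_lweight_le_wnorm hq n)
    _ = wnorm a ρ q / 4 * (‖q n‖ * lweight a ρ n) := by ring

lemma summable_norm_kirchhoffCoeff_mul_sq (hξ : ∀ n, 0 ≤ ξ n) (ha : 1 ≤ a) (hρ : 0 ≤ ρ)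
    (hq : Summable fun n => ‖q n‖ * lweight a ρ n) :
    Summable fun n => ‖(kirchhoffCoeff ξ n : ℂ) * q n ^ 2‖ :=
  .of_nonneg_of_le (fun _ => norm_nonneg _) (norm_kirchhoffCoeff_mul_sq_le hξ ha hρ hq)
    (hq.mul_left _)

lemma norm_tsum_kirchhoffCoeff_mul_sq_le (hξ : ∀ n, 0 ≤ ξ n) (ha : 1 ≤ a) (hρ : 0 ≤ ρ)
    (hq : Summable fun n => ‖q n‖ * lweight a ρ n) :
    ‖∑' n, (kirchhoffCoeff ξ n : ℂ) * q n ^ 2‖ ≤ wnorm a ρ q ^ 2 / 4 := by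
  calc ‖∑' n, (kirchhoffCoeff ξ n : ℂ) * q n ^ 2‖
      ≤ ∑' n, ‖(kirchhoffCoeff ξ n : ℂ) * q n ^ 2‖ :=
        norm_tsum_le_tsum_norm (summable_norm_kirchhoffCoeff_mul_sq hξ ha hρ hq)
    _ ≤ ∑' n, wnorm a ρ q / 4 * (‖q n‖ * lweight a ρ n) :=
        (summable_norm_kirchhoffCoeff_mul_sq hξ ha hρ hq).tsum_le_tsum
          (norm_kirchhoffCoeff_mul_sq_le hξ ha hρ hq) (hq.mul_left _)
    _ = wnorm a ρ q ^ 2 / 4 := by rw [tsum_mul_left, ← wnorm]; ring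

lemma norm_kirchhoffCoeff_mul_mul_lweight_le (hξ : ∀ n, 0 ≤ ξ n) (T : ℂ) (n : ℤ) :
    ‖(kirchhoffCoeff ξ n : ℂ) * q n * T‖ * lweight (a - 1) ρ n
      ≤ ‖T‖ / 4 * (‖q n‖ * lweight a ρ n) := by
  rw [norm_mul, norm_mul, Complex.norm_real, Real.norm_of_nonneg (kirchhoffCoeff_nonneg ξ n)]
  calc kirchhoffCoeff ξ n * ‖q n‖ * ‖T‖ * lweight (a - 1) ρ n
      = (kirchhoffCoeff ξ n * lweight (a - 1) ρ n) * (‖q n‖ * ‖T‖) := by ring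
    _ ≤ lweight a ρ n / 4 * (‖q n‖ * ‖T‖) := by
        gcongr; exact kirchhoffCoeff_mul_lweight_sub_one_le (hξ n) a ρ
    _ = ‖T‖ / 4 * (‖q n‖ * lweight a ρ n) := by ring

lemma summable_norm_kirchhoffCoeff_mul_mul_lweight (hξ : ∀ n, 0 ≤ ξ n)
    (hq : Summable fun n => ‖q n‖ * lweight a ρ n) (T : ℂ) :
    Summable fun n => ‖(kirchhoffCoeff ξ n : ℂ) * q n * T‖ * lweight (a - 1) ρ n :=
  .of_nonneg_of_le (fun _ => mul_nonneg (norm_nonneg _) (lweight_nonneg _ _ _))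
    (norm_kirchhoffCoeff_mul_mul_lweight_le hξ T) (hq.mul_left _)

lemma tsum_norm_kirchhoffCoeff_mul_mul_lweight_le (hξ : ∀ n, 0 ≤ ξ n)
    (hq : Summable fun n => ‖q n‖ * lweight a ρ n) (T : ℂ) :
    ∑' n, ‖(kirchhoffCoeff ξ n : ℂ) * q n * T‖ * lweight (a - 1) ρ n
      ≤ ‖T‖ / 4 * wnorm a ρ q := by
  rw [wnorm, ← tsum_mul_left]
  exact (summable_norm_kirchhoffCoeff_mul_mul_lweight hξ hq T).tsum_le_tsum
    (norm_kirchhoffCoeff_mul_mul_lweight_le hξ T) (hq.mul_left _)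

end Gradient

theorem kirchhoff_quartic_gradient_bound_general (a ρ : ℝ) (ha : 1 ≤ a) (hρ : 0 < ρ)
    (ξ : ℤ → ℝ) (hξ : ∀ n, ξ n ∈ Set.Icc (0:ℝ) 1)
    (w wb : ℤ → ℂ)
    (hw : Summable fun n : ℤ => norm (w n) * lweight a ρ n)
    (hwb : Summable fun n : ℤ => norm (wb n) * lweight a ρ n) :
    Summable (fun m : ℤ =>
      norm ((((m : ℝ) ^ 2 / (4 * Real.sqrt ((m : ℝ) ^ 2 + ξ m)) : ℝ) : ℂ) *
        (w m + wb m) ^ 2)) ∧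
    Summable (fun n : ℤ =>
      norm ((((n : ℝ) ^ 2 / (4 * Real.sqrt ((n : ℝ) ^ 2 + ξ n)) : ℝ) : ℂ) *
          (w n + wb n) *
          ∑' m : ℤ, (((m : ℝ) ^ 2 / (4 * Real.sqrt ((m : ℝ) ^ 2 + ξ m)) : ℝ) : ℂ) *
            (w m + wb m) ^ 2) *
        lweight (a - 1) ρ n) ∧
    (∑' n : ℤ,
      norm ((((n : ℝ) ^ 2 / (4 * Real.sqrt ((n : ℝ) ^ 2 + ξ n)) : ℝ) : ℂ) *
          (w n + wb n) *
          ∑' m : ℤ, (((m : ℝ) ^ 2 / (4 * Real.sqrt ((m : ℝ) ^ 2 + ξ m)) : ℝ) : ℂ) *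
            (w m + wb m) ^ 2) *
        lweight (a - 1) ρ n)
      ≤ (1 / 16) * (wnorm a ρ w + wnorm a ρ wb) ^ 3 := by
  have hξ' : ∀ n, 0 ≤ ξ n := fun n => (hξ n).1
  have hq := summable_norm_add_mul_lweight hw hwb
  set S := wnorm a ρ (fun n => w n + wb n)
  have hS : S ≤ wnorm a ρ w + wnorm a ρ wb := wnorm_add_le hw hwb
  have hT := norm_tsum_kirchhoffCoeff_mul_sq_le hξ' ha hρ.le hq
  refine ⟨summable_norm_kirchhoffCoeff_mul_sq hξ' ha hρ.le hq,
    summable_norm_kirchhoffCoeff_mul_mul_lweight hξ' hq _, ?_⟩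
  calc _ ≤ ‖∑' m, (kirchhoffCoeff ξ m : ℂ) * (w m + wb m) ^ 2‖ / 4 * S :=
        tsum_norm_kirchhoffCoeff_mul_mul_lweight_le hξ' hq _
    _ ≤ S ^ 2 / 4 / 4 * S := by gcongr; exact wnorm_nonneg _ _ _
    _ = 1 / 16 * S ^ 3 := by ring
    _ ≤ 1 / 16 * (wnorm a ρ w + wnorm a ρ wb) ^ 3 := by
        gcongr; exact wnorm_nonneg _ _ _

/-- the gradient `G¹_{w̄}` of the Kirchhoff quartic maps
`l¹_{a,ρ} × l¹_{a,ρ}` into `l¹_{a−1,ρ}` with the cubic bound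
`Σ_n |v_n| max(|n|,1)^{a−1} e^{|n|ρ} ≤ (1/16)(‖w‖_{a,ρ}+‖w̄‖_{a,ρ})³`. -/
theorem kirchhoff_quartic_gradient_bound (a ρ : ℝ) (ha : 1 ≤ a) (hρ : 0 < ρ)
    (ξ : ℤ → ℝ) (hξ : ∀ n, ξ n ∈ Set.Icc (0:ℝ) 1) (hξ0 : 0 < ξ 0)
    (w wb : ℤ → ℂ)
    (hw : Summable fun n : ℤ => norm (w n) * lweight a ρ n)
    (hwb : Summable fun n : ℤ => norm (wb n) * lweight a ρ n) :
    Summable (fun m : ℤ =>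
      norm ((((m : ℝ) ^ 2 / (4 * Real.sqrt ((m : ℝ) ^ 2 + ξ m)) : ℝ) : ℂ) *
        (w m + wb m) ^ 2)) ∧
    Summable (fun n : ℤ =>
      norm ((((n : ℝ) ^ 2 / (4 * Real.sqrt ((n : ℝ) ^ 2 + ξ n)) : ℝ) : ℂ) *
          (w n + wb n) *
          ∑' m : ℤ, (((m : ℝ) ^ 2 / (4 * Real.sqrt ((m : ℝ) ^ 2 + ξ m)) : ℝ) : ℂ) *
            (w m + wb m) ^ 2) *
        lweight (a - 1) ρ n) ∧
    (∑' n : ℤ,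
      norm ((((n : ℝ) ^ 2 / (4 * Real.sqrt ((n : ℝ) ^ 2 + ξ n)) : ℝ) : ℂ) *
          (w n + wb n) *
          ∑' m : ℤ, (((m : ℝ) ^ 2 / (4 * Real.sqrt ((m : ℝ) ^ 2 + ξ m)) : ℝ) : ℂ) *
            (w m + wb m) ^ 2) *
        lweight (a - 1) ρ n)
      ≤ (1 / 16) * (wnorm a ρ w + wnorm a ρ wb) ^ 3 :=
  kirchhoff_quartic_gradient_bound_general a ρ ha hρ ξ hξ w wb hw hwb
end

section
/- Let ν, b ≥ 1, let i_1,…,i_b be distinct integers, let O be a compact subset of ℝ^ν × (0,1)^b, let ω(σ) = Φ(σ) be the frequency map, and let τ ≥ ν + b. For k = (k₁,k₂) ∈ ℤ^ν × ℤ^b set |k| = max(|k₁|₁, |k₂|₁) (the maximum of the ℓ¹ norms of the two blocks). Then there is a constant c, depending only on O, ν, b, τ and max_j |i_j|, such that for every γ > 0: Σ_{k ∈ ℤ^{ν+b}, k ≠ 0} Leb{σ ∈ O : |⟨k, ω(σ)⟩| < γ/|k|^τ} ≤ c γ; in particular the union over k ≠ 0 of these resonant sets has Lebesgue measure at most c γ.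 -/
open MeasureTheory

/-- The frequency map `Φ(ω̄,ξ) = (ω̄, √(i_1²+ξ_1), …, √(i_b²+ξ_b))`. -/
noncomputable def freqMap (ν b : ℕ) (i : Fin b → ℤ) :
    (Fin ν → ℝ) × (Fin b → ℝ) → (Fin ν → ℝ) × (Fin b → ℝ) :=
  fun σ => (σ.1, fun j => Real.sqrt ((i j : ℝ) ^ 2 + σ.2 j))

/-- The parameter domain `ℝ^ν × (0,1)^b`. -/
def freqDomain (ν b : ℕ) : Set ((Fin ν → ℝ) × (Fin b → ℝ)) :=
  {σ | ∀ j, σ.2 j ∈ Set.Ioo (0:ℝ) 1}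

/-- The pairing `⟨k,ω⟩` for `k ∈ ℤ^ν × ℤ^b`, `ω ∈ ℝ^ν × ℝ^b`. -/
noncomputable def pairKW (ν b : ℕ) (k : (Fin ν → ℤ) × (Fin b → ℤ))
    (ω : (Fin ν → ℝ) × (Fin b → ℝ)) : ℝ :=
  (∑ j, (k.1 j : ℝ) * ω.1 j) + ∑ j, (k.2 j : ℝ) * ω.2 j

/-- `|k| = max(|k₁|₁, |k₂|₁)`, the maximum of the ℓ¹ norms of the two blocks. -/
def blockNorm (ν b : ℕ) (k : (Fin ν → ℤ) × (Fin b → ℤ)) : ℤ :=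
  max (∑ j, |k.1 j|) (∑ j, |k.2 j|)

/-! ### Auxiliary lemmas -/

lemma vol_le_of_diam {s : Set ℝ} {L : ℝ}
    (h : ∀ x ∈ s, ∀ y ∈ s, |x - y| ≤ L) : volume s ≤ ENNReal.ofReal (2 * L) := by
  rcases s.eq_empty_or_nonempty with rfl | ⟨x₀, hx₀⟩
  · simp
  · have hsub : s ⊆ Set.Icc (x₀ - L) (x₀ + L) := by
      intro y hy
      have := h y hy x₀ hx₀
      rcases abs_le.1 this with ⟨h1, h2⟩
      exact ⟨by linarith, by linarith⟩
    calc volume s ≤ volume (Set.Icc (x₀ - L) (x₀ + L)) := measure_mono hsub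
      _ = ENNReal.ofReal (2 * L) := by rw [Real.volume_Icc]; ring_nf

lemma vol_slice {Z : Type*} [MeasureSpace Z] [SigmaFinite (volume : Measure Z)]
    {S : Set (Z × ℝ)} (hS : MeasurableSet S) {B : Set Z} (hB : MeasurableSet B)
    {L : ℝ} (hsub : ∀ p ∈ S, p.1 ∈ B)
    (hdiam : ∀ z t s, (z, t) ∈ S → (z, s) ∈ S → |t - s| ≤ L) :
    volume S ≤ ENNReal.ofReal (2 * L) * volume B := by
  rw [Measure.volume_eq_prod, Measure.prod_apply hS]
  calc (∫⁻ z, volume (Prod.mk z ⁻¹' S))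
      ≤ ∫⁻ z, B.indicator (fun _ => ENNReal.ofReal (2 * L)) z := by
        apply lintegral_mono; intro z
        by_cases hz : z ∈ B
        · rw [Set.indicator_of_mem hz]
          exact vol_le_of_diam (fun x hx y hy => hdiam z x y hx hy)
        · have he : Prod.mk z ⁻¹' S = ∅ :=
            Set.eq_empty_of_forall_notMem (fun t ht => hz (hsub _ ht))
          simp [he, Set.indicator_of_notMem hz]
    _ = ENNReal.ofReal (2 * L) * volume B := lintegral_indicator_const hB _

lemma vol_le_of_equiv {X Z : Type*} [MeasureSpace X] [MeasureSpace Z]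
    [SigmaFinite (volume : Measure Z)]
    (φ : X ≃ᵐ Z × ℝ) (hφ : MeasurePreserving φ volume volume)
    {S : Set X} (hS : MeasurableSet S) {B : Set Z} (hB : MeasurableSet B)
    {L : ℝ} (hsub : ∀ x ∈ S, (φ x).1 ∈ B)
    (hdiam : ∀ x ∈ S, ∀ y ∈ S, (φ x).1 = (φ y).1 → |(φ x).2 - (φ y).2| ≤ L) :
    volume S ≤ ENNReal.ofReal (2 * L) * volume B := by
  have hps : MeasurePreserving φ.symm volume volume := hφ.symm φ
  have key : volume S = volume (φ.symm ⁻¹' S) :=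
    (hps.measure_preimage hS.nullMeasurableSet).symm
  rw [key]
  apply vol_slice (φ.symm.measurable hS) hB
  · rintro ⟨z, t⟩ hp
    have := hsub _ hp
    rwa [MeasurableEquiv.apply_symm_apply] at this
  · intro z t s ht hs
    have := hdiam _ ht _ hs
    rw [MeasurableEquiv.apply_symm_apply, MeasurableEquiv.apply_symm_apply] at this
    exact this rfl

lemma summable_pi_int {n : ℕ} {g : ℤ → ℝ} (hg0 : ∀ m, 0 ≤ g m) (hg : Summable g) :
    Summable (fun k : Fin n → ℤ => ∏ j, g (k j)) := by
  induction n with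
  | zero => simp; exact .of_finite
  | succ n ih =>
    have h0 : (0 : ℤ → ℝ) ≤ g := hg0
    have h1 : (0 : ((Fin n → ℤ) → ℝ)) ≤ (fun k : Fin n → ℤ => ∏ j, g (k j)) :=
      fun k => Finset.prod_nonneg fun j _ => hg0 _
    have h2 := Summable.mul_of_nonneg (f := g)
      (g := fun k : Fin n → ℤ => ∏ j, g (k j)) hg ih h0 h1
    apply (Equiv.summable_iff (Fin.consEquiv (fun _ : Fin (n+1) => ℤ))).1
    apply h2.congr
    rintro ⟨x, k⟩
    simp [Fin.consEquiv, Fin.prod_univ_succ]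

lemma summable_g {p : ℝ} (hp : 1 < p) :
    Summable (fun m : ℤ => (1 + |(m : ℝ)|) ^ (-p)) := by
  have h1 : Summable fun m : ℤ => |(m : ℝ)| ^ (-p) := Real.summable_abs_int_rpow hp
  have h2 : Summable fun m : ℤ => (if m = 0 then (1:ℝ) else 0) :=
    summable_of_ne_finset_zero (s := {0}) (by intro m hm; simp at hm; simp [hm])
  apply Summable.of_nonneg_of_le (fun m => Real.rpow_nonneg (by positivity) _)
    (fun m => ?_) (h1.add h2)
  by_cases hm : m = 0
  · simp [hm, Real.zero_rpow (by linarith : -p ≠ 0), Real.one_rpow]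
  · have hm1 : (1:ℝ) ≤ |(m : ℝ)| := by
      have h3 : (1:ℤ) ≤ |m| := Int.one_le_abs (by exact_mod_cast hm)
      calc (1:ℝ) ≤ ((|m| : ℤ) : ℝ) := by exact_mod_cast h3
        _ = |(m:ℝ)| := by push_cast; ring
    have h4 : (1 + |(m:ℝ)|) ^ (-p) ≤ |(m:ℝ)| ^ (-p) :=
      Real.rpow_le_rpow_of_nonpos (by linarith) (by linarith) (by linarith)
    simp [hm]; linarith

noncomputable def phiA (m b : ℕ) (j₀ : Fin (m+1)) :
    ((Fin (m+1) → ℝ) × (Fin b → ℝ)) ≃ᵐ ((Fin m → ℝ) × (Fin b → ℝ)) × ℝ :=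
  ((MeasurableEquiv.piFinSuccAbove (fun _ => ℝ) j₀).prodCongr (.refl _)).trans
    (MeasurableEquiv.prodAssoc.trans .prodComm)

lemma phiA_apply (m b : ℕ) (j₀ : Fin (m+1)) (σ : (Fin (m+1) → ℝ) × (Fin b → ℝ)) :
    phiA m b j₀ σ = (((fun j => σ.1 (j₀.succAbove j)), σ.2), σ.1 j₀) := rfl

lemma phiA_mp (m b : ℕ) (j₀ : Fin (m+1)) :
    MeasurePreserving (phiA m b j₀) volume volume := by
  have h1 : MeasurePreserving
      (Prod.map (MeasurableEquiv.piFinSuccAbove (fun _ : Fin (m+1) => ℝ) j₀)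
        (id : (Fin b → ℝ) → (Fin b → ℝ))) volume volume :=
    (volume_preserving_piFinSuccAbove (fun _ => ℝ) j₀).prod (MeasurePreserving.id _)
  have h2 : MeasurePreserving (MeasurableEquiv.prodAssoc :
      ((ℝ × (Fin m → ℝ)) × (Fin b → ℝ)) ≃ᵐ _) volume volume :=
    measurePreserving_prodAssoc _ _ _
  have h3 : MeasurePreserving (Prod.swap :
      (ℝ × ((Fin m → ℝ) × (Fin b → ℝ))) → _) volume volume :=
    Measure.measurePreserving_swap
  exact (h3.comp h2).comp h1

noncomputable def phiB (ν l : ℕ) (j₀ : Fin (l+1)) :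
    ((Fin ν → ℝ) × (Fin (l+1) → ℝ)) ≃ᵐ ((Fin ν → ℝ) × (Fin l → ℝ)) × ℝ :=
  ((MeasurableEquiv.refl _).prodCongr
      ((MeasurableEquiv.piFinSuccAbove (fun _ => ℝ) j₀).trans .prodComm)).trans
    MeasurableEquiv.prodAssoc.symm

lemma phiB_apply (ν l : ℕ) (j₀ : Fin (l+1)) (σ : (Fin ν → ℝ) × (Fin (l+1) → ℝ)) :
    phiB ν l j₀ σ = ((σ.1, (fun j => σ.2 (j₀.succAbove j))), σ.2 j₀) := rfl

lemma phiB_mp (ν l : ℕ) (j₀ : Fin (l+1)) :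
    MeasurePreserving (phiB ν l j₀) volume volume := by
  have h1 : MeasurePreserving
      (Prod.map (id : (Fin ν → ℝ) → _)
        (fun x : Fin (l+1) → ℝ =>
          Prod.swap (MeasurableEquiv.piFinSuccAbove (fun _ : Fin (l+1) => ℝ) j₀ x)))
      volume volume :=
    (MeasurePreserving.id _).prod
      ((Measure.measurePreserving_swap).comp (volume_preserving_piFinSuccAbove (fun _ => ℝ) j₀))
  have h2 : MeasurePreserving (MeasurableEquiv.prodAssoc.symm :
      ((Fin ν → ℝ) × ((Fin l → ℝ) × ℝ)) ≃ᵐ _) volume volume :=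
    (measurePreserving_prodAssoc _ _ _).symm _
  exact h2.comp h1

lemma one_le_blockNorm {ν b : ℕ} {k : (Fin ν → ℤ) × (Fin b → ℤ)} (hk : k ≠ 0) :
    1 ≤ blockNorm ν b k := by
  by_contra h
  push_neg at h
  have h1 : 0 ≤ ∑ j, |k.1 j| := Finset.sum_nonneg fun j _ => abs_nonneg _
  have h2 : 0 ≤ ∑ j, |k.2 j| := Finset.sum_nonneg fun j _ => abs_nonneg _
  have hm1 : (∑ j, |k.1 j|) ≤ blockNorm ν b k := le_max_left _ _
  have hm2 : (∑ j, |k.2 j|) ≤ blockNorm ν b k := le_max_right _ _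
  have e1 : (∑ j, |k.1 j|) = 0 := by omega
  have e2 : (∑ j, |k.2 j|) = 0 := by omega
  apply hk
  have hk1 : k.1 = 0 := by
    funext j
    have := (Finset.sum_eq_zero_iff_of_nonneg (fun j _ => abs_nonneg (k.1 j))).1 e1 j
      (Finset.mem_univ j)
    simpa [abs_eq_zero] using this
  have hk2 : k.2 = 0 := by
    funext j
    have := (Finset.sum_eq_zero_iff_of_nonneg (fun j _ => abs_nonneg (k.2 j))).1 e2 j
      (Finset.mem_univ j)
    simpa [abs_eq_zero] using this
  exact Prod.ext hk1 hk2

lemma coord_le_blockNorm1 {ν b : ℕ} (k : (Fin ν → ℤ) × (Fin b → ℤ)) (j : Fin ν) :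
    |k.1 j| ≤ blockNorm ν b k :=
  le_trans (Finset.single_le_sum (fun j _ => abs_nonneg (k.1 j)) (Finset.mem_univ j))
    (le_max_left _ _)

lemma coord_le_blockNorm2 {ν b : ℕ} (k : (Fin ν → ℤ) × (Fin b → ℤ)) (j : Fin b) :
    |k.2 j| ≤ blockNorm ν b k :=
  le_trans (Finset.single_le_sum (fun j _ => abs_nonneg (k.2 j)) (Finset.mem_univ j))
    (le_max_right _ _)


lemma arithA (dk dd Nr mr α C₀ : ℝ) (hdd : 0 ≤ dd) (hα : 0 < α) (hmr : 0 ≤ mr)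
    (habs : dk * dd ≤ 2*α) (hj : Nr ≤ mr * dk) (hC : 2*mr ≤ C₀) :
    dd * Nr ≤ C₀ * α := by
  calc dd*Nr ≤ dd*(mr*dk) := mul_le_mul_of_nonneg_left hj hdd
    _ = mr*(dk*dd) := by ring
    _ ≤ mr*(2*α) := mul_le_mul_of_nonneg_left habs hmr
    _ = (2*mr)*α := by ring
    _ ≤ C₀*α := mul_le_mul_of_nonneg_right hC hα.le

lemma arithB (dk ds ssum Nr sA lr α C₀ : ℝ)
    (hds : 0 ≤ ds) (hdk : 0 ≤ dk) (hNr : 0 < Nr) (hα : 0 < α)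
    (hsA : 0 ≤ sA) (hlr : 0 ≤ lr)
    (hssum0 : 0 ≤ ssum) (hssum : ssum ≤ 2 * sA)
    (habs : dk * ds ≤ 2 * α) (hj : Nr ≤ lr * dk) (hC : 4 * lr * sA ≤ C₀) :
    (ds * ssum) * Nr ≤ C₀ * α := by
  have t2 : dk * ds * ssum ≤ (2*α) * (2*sA) :=
    mul_le_mul habs hssum hssum0 (by positivity)
  calc ds*ssum*Nr ≤ ds*ssum*(lr*dk) :=
      mul_le_mul_of_nonneg_left hj (mul_nonneg hds hssum0)
    _ = lr*(dk*ds*ssum) := by ring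
    _ ≤ lr*((2*α)*(2*sA)) := mul_le_mul_of_nonneg_left t2 hlr
    _ = (4*lr*sA)*α := by ring
    _ ≤ C₀*α := mul_le_mul_of_nonneg_right hC hα.le


lemma weight_le {n1 n2 : ℕ} (p : ℝ) (hp : 0 ≤ p) (k : (Fin n1 → ℤ) × (Fin n2 → ℤ))
    (hk : k ≠ 0) (hpd : p * ((n1 + n2 : ℕ) : ℝ) = ((n1 + n2 : ℕ) : ℝ) + 1) :
    (((blockNorm n1 n2 k : ℤ) : ℝ) ^ ((n1+n2)+1))⁻¹
      ≤ 2^((n1+n2)+1) * ((∏ j, (1 + |((k.1 j : ℤ) : ℝ)|) ^ (-p)) *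
          ∏ j, (1 + |((k.2 j : ℤ) : ℝ)|) ^ (-p)) := by
  have hN1 : 1 ≤ blockNorm n1 n2 k := one_le_blockNorm hk
  have hNr1 : (1:ℝ) ≤ ((blockNorm n1 n2 k : ℤ) : ℝ) := by exact_mod_cast hN1
  have hNrpos : (0:ℝ) < ((blockNorm n1 n2 k : ℤ) : ℝ) := by linarith
  have hbound1 : ∀ j, (1 + |((k.1 j : ℤ) : ℝ)|) ≤ 2 * ((blockNorm n1 n2 k : ℤ) : ℝ) := by
    intro j
    have h1 := coord_le_blockNorm1 k j
    have h2 : |((k.1 j : ℤ) : ℝ)| ≤ ((blockNorm n1 n2 k : ℤ) : ℝ) := by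
      rw [← Int.cast_abs]; exact_mod_cast h1
    linarith
  have hbound2 : ∀ j, (1 + |((k.2 j : ℤ) : ℝ)|) ≤ 2 * ((blockNorm n1 n2 k : ℤ) : ℝ) := by
    intro j
    have h1 := coord_le_blockNorm2 k j
    have h2 : |((k.2 j : ℤ) : ℝ)| ≤ ((blockNorm n1 n2 k : ℤ) : ℝ) := by
      rw [← Int.cast_abs]; exact_mod_cast h1
    linarith
  have hP1 : (∏ j, (1 + |((k.1 j : ℤ) : ℝ)|) ^ (-p))
      = (∏ j, (1 + |((k.1 j : ℤ) : ℝ)|) ^ p)⁻¹ := by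
    rw [← Finset.prod_inv_distrib]
    exact Finset.prod_congr rfl fun j _ => Real.rpow_neg (by positivity) _
  have hP2 : (∏ j, (1 + |((k.2 j : ℤ) : ℝ)|) ^ (-p))
      = (∏ j, (1 + |((k.2 j : ℤ) : ℝ)|) ^ p)⁻¹ := by
    rw [← Finset.prod_inv_distrib]
    exact Finset.prod_congr rfl fun j _ => Real.rpow_neg (by positivity) _
  have hQ1pos : 0 < ∏ j, (1 + |((k.1 j : ℤ) : ℝ)|) ^ p :=
    Finset.prod_pos fun j _ => Real.rpow_pos_of_pos (by positivity) _
  have hQ2pos : 0 < ∏ j, (1 + |((k.2 j : ℤ) : ℝ)|) ^ p :=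
    Finset.prod_pos fun j _ => Real.rpow_pos_of_pos (by positivity) _
  have hQ1le : (∏ j, (1 + |((k.1 j : ℤ) : ℝ)|) ^ p)
      ≤ ((2 * ((blockNorm n1 n2 k : ℤ) : ℝ)) ^ p) ^ n1 := by
    calc (∏ j, (1 + |((k.1 j : ℤ) : ℝ)|) ^ p)
        ≤ ∏ _j : Fin n1, (2 * ((blockNorm n1 n2 k : ℤ) : ℝ)) ^ p :=
        Finset.prod_le_prod (fun j _ => Real.rpow_nonneg (by positivity) _)
          (fun j _ => Real.rpow_le_rpow (by positivity) (hbound1 j) hp)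
      _ = ((2 * ((blockNorm n1 n2 k : ℤ) : ℝ)) ^ p) ^ n1 := by
        rw [Finset.prod_const, Finset.card_univ, Fintype.card_fin]
  have hQ2le : (∏ j, (1 + |((k.2 j : ℤ) : ℝ)|) ^ p)
      ≤ ((2 * ((blockNorm n1 n2 k : ℤ) : ℝ)) ^ p) ^ n2 := by
    calc (∏ j, (1 + |((k.2 j : ℤ) : ℝ)|) ^ p)
        ≤ ∏ _j : Fin n2, (2 * ((blockNorm n1 n2 k : ℤ) : ℝ)) ^ p :=
        Finset.prod_le_prod (fun j _ => Real.rpow_nonneg (by positivity) _)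
          (fun j _ => Real.rpow_le_rpow (by positivity) (hbound2 j) hp)
      _ = ((2 * ((blockNorm n1 n2 k : ℤ) : ℝ)) ^ p) ^ n2 := by
        rw [Finset.prod_const, Finset.card_univ, Fintype.card_fin]
  have h2Nr : (0:ℝ) ≤ 2 * ((blockNorm n1 n2 k : ℤ) : ℝ) := by linarith
  have e1 : (((2 * ((blockNorm n1 n2 k : ℤ) : ℝ)) ^ p) ^ (n1+n2) : ℝ)
      = (2 * ((blockNorm n1 n2 k : ℤ) : ℝ)) ^ ((n1+n2)+1) := by
    rw [← Real.rpow_natCast ((2 * ((blockNorm n1 n2 k : ℤ) : ℝ)) ^ p) (n1+n2),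
      ← Real.rpow_mul h2Nr, hpd]
    have : ((n1+n2 : ℕ) : ℝ) + 1 = (((n1+n2)+1 : ℕ) : ℝ) := by push_cast; ring
    rw [this, Real.rpow_natCast]
  have hQle : (∏ j, (1 + |((k.1 j : ℤ) : ℝ)|) ^ p) * (∏ j, (1 + |((k.2 j : ℤ) : ℝ)|) ^ p)
      ≤ 2^((n1+n2)+1) * ((blockNorm n1 n2 k : ℤ) : ℝ) ^ ((n1+n2)+1) := by
    calc (∏ j, (1 + |((k.1 j : ℤ) : ℝ)|) ^ p) * (∏ j, (1 + |((k.2 j : ℤ) : ℝ)|) ^ p)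
        ≤ ((2 * ((blockNorm n1 n2 k : ℤ) : ℝ)) ^ p) ^ n1 *
          ((2 * ((blockNorm n1 n2 k : ℤ) : ℝ)) ^ p) ^ n2 :=
        mul_le_mul hQ1le hQ2le hQ2pos.le (by positivity)
      _ = ((2 * ((blockNorm n1 n2 k : ℤ) : ℝ)) ^ p) ^ (n1+n2) := (pow_add _ _ _).symm
      _ = (2 * ((blockNorm n1 n2 k : ℤ) : ℝ)) ^ ((n1+n2)+1) := e1
      _ = 2^((n1+n2)+1) * ((blockNorm n1 n2 k : ℤ) : ℝ) ^ ((n1+n2)+1) := mul_pow _ _ _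
  rw [hP1, hP2, ← mul_inv]
  rw [inv_eq_one_div, inv_eq_one_div, mul_one_div,
    div_le_div_iff₀ (pow_pos hNrpos _) (mul_pos hQ1pos hQ2pos), one_mul]
  calc (∏ j, (1 + |((k.1 j : ℤ) : ℝ)|) ^ p) * (∏ j, (1 + |((k.2 j : ℤ) : ℝ)|) ^ p)
      ≤ 2^((n1+n2)+1) * ((blockNorm n1 n2 k : ℤ) : ℝ) ^ ((n1+n2)+1) := hQle
    _ = 2^((n1+n2)+1) * ((blockNorm n1 n2 k : ℤ) : ℝ) ^ ((n1+n2)+1) := rfl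

set_option maxHeartbeats 2000000 in
/-- first measure estimate for assumption (A3): the total measure of the
zero-order resonant sets `{σ ∈ O : |⟨k,ω(σ)⟩| < γ/|k|^τ}`, `k ≠ 0`, is `≤ cγ`. -/
theorem zero_order_melnikov_measure (ν b : ℕ) (hν : 1 ≤ ν) (hb : 1 ≤ b)
    (i : Fin b → ℤ) (hi : Function.Injective i)
    (O : Set ((Fin ν → ℝ) × (Fin b → ℝ))) (hOc : IsCompact O)
    (hOU : O ⊆ freqDomain ν b)
    (τ : ℝ) (hτ : ((ν : ℝ) + b) ≤ τ) :
    ∃ c : ℝ, 0 < c ∧ ∀ γ : ℝ, 0 < γ →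
      (∑' k : (Fin ν → ℤ) × (Fin b → ℤ),
        if k = 0 then 0 else
          volume {σ ∈ O |
            |pairKW ν b k (freqMap ν b i σ)| < γ / (blockNorm ν b k : ℝ) ^ τ})
        ≤ ENNReal.ofReal (c * γ) ∧
      volume {σ ∈ O | ∃ k : (Fin ν → ℤ) × (Fin b → ℤ), k ≠ 0 ∧
          |pairKW ν b k (freqMap ν b i σ)| < γ / (blockNorm ν b k : ℝ) ^ τ}
        ≤ ENNReal.ofReal (c * γ) := by
  classical
  obtain ⟨m, rfl⟩ : ∃ m, ν = m + 1 := ⟨ν - 1, by omega⟩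
  obtain ⟨l, rfl⟩ : ∃ l, b = l + 1 := ⟨b - 1, by omega⟩
  set d : ℕ := (m + 1) + (l + 1) with hd
  -- bound on O
  obtain ⟨R₀, hR₀⟩ := isBounded_iff_forall_norm_le.1 hOc.isBounded
  set R : ℝ := max R₀ 1 with hR
  have hR1 : (1:ℝ) ≤ R := le_max_right _ _
  have hRO : ∀ σ ∈ O, (∀ j, |σ.1 j| ≤ R) ∧ (∀ j, |σ.2 j| ≤ R) := by
    intro σ hσ
    have hn : ‖σ‖ ≤ R := le_trans (hR₀ σ hσ) (le_max_left _ _)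
    constructor
    · intro j
      calc |σ.1 j| = ‖σ.1 j‖ := (Real.norm_eq_abs _).symm
        _ ≤ ‖σ.1‖ := norm_le_pi_norm σ.1 j
        _ ≤ ‖σ‖ := norm_fst_le σ
        _ ≤ R := hn
    · intro j
      calc |σ.2 j| = ‖σ.2 j‖ := (Real.norm_eq_abs _).symm
        _ ≤ ‖σ.2‖ := norm_le_pi_norm σ.2 j
        _ ≤ ‖σ‖ := norm_snd_le σ
        _ ≤ R := hn
  -- sqrt bounds
  set A : ℝ := 1 + ∑ j, ((i j : ℝ)) ^ 2 with hA
  have hA1 : 1 ≤ A := by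
    have : 0 ≤ ∑ j, ((i j : ℝ)) ^ 2 := Finset.sum_nonneg fun j _ => sq_nonneg _
    linarith
  have hAj : ∀ (j : Fin (l+1)) (t : ℝ), t ≤ 1 → (i j : ℝ) ^ 2 + t ≤ A := by
    intro j t ht
    have : ((i j : ℝ)) ^ 2 ≤ ∑ j', ((i j' : ℝ)) ^ 2 :=
      Finset.single_le_sum (f := fun j' => ((i j' : ℝ)) ^ 2)
        (fun j' _ => sq_nonneg _) (Finset.mem_univ j)
    simp only [hA]; linarith
  set sA : ℝ := Real.sqrt A with hsA
  have hsA1 : 1 ≤ sA := by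
    rw [hsA, show (1:ℝ) = Real.sqrt 1 by simp]
    exact Real.sqrt_le_sqrt hA1
  set C₀ : ℝ := max (2 * ((m:ℝ) + 1)) (4 * ((l:ℝ) + 1) * sA) with hC₀
  have hC₀pos : 0 < C₀ := lt_of_lt_of_le (by positivity) (le_max_left _ _)
  set V : ℝ := (2 * R) ^ d with hV
  have hVpos : 0 < V := by positivity
  set C₁ : ℝ := 2 * C₀ * V with hC₁
  have hC₁pos : 0 < C₁ := by positivity
  -- the per-k measure estimate
  have key : ∀ (k : (Fin (m+1) → ℤ) × (Fin (l+1) → ℤ)), k ≠ 0 → ∀ α : ℝ, 0 < α →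
      volume {σ ∈ O | |pairKW (m+1) (l+1) k (freqMap (m+1) (l+1) i σ)| < α}
        ≤ ENNReal.ofReal (C₁ * α / (blockNorm (m+1) (l+1) k : ℝ)) := by
    intro k hk α hα
    have hN1 : 1 ≤ blockNorm (m+1) (l+1) k := one_le_blockNorm hk
    have hNr1 : (1:ℝ) ≤ ((blockNorm (m+1) (l+1) k : ℤ) : ℝ) := by exact_mod_cast hN1
    have hNrpos : (0:ℝ) < ((blockNorm (m+1) (l+1) k : ℤ) : ℝ) := by linarith
    have hfcont : Continuous (fun σ : (Fin (m+1) → ℝ) × (Fin (l+1) → ℝ) =>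
        pairKW (m+1) (l+1) k (freqMap (m+1) (l+1) i σ)) := by
      simp only [pairKW, freqMap]
      apply Continuous.add
      · exact continuous_finset_sum _ fun j _ =>
          continuous_const.mul ((continuous_apply j).comp continuous_fst)
      · exact continuous_finset_sum _ fun j _ =>
          continuous_const.mul (Real.continuous_sqrt.comp
            (continuous_const.add ((continuous_apply j).comp continuous_snd)))
    have hSmeas : MeasurableSet {σ ∈ O |
        |pairKW (m+1) (l+1) k (freqMap (m+1) (l+1) i σ)| < α} := by
      have h1 : MeasurableSet {σ : (Fin (m+1) → ℝ) × (Fin (l+1) → ℝ) |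
          |pairKW (m+1) (l+1) k (freqMap (m+1) (l+1) i σ)| < α} :=
        measurableSet_lt hfcont.abs.measurable measurable_const
      exact hOc.measurableSet.inter h1
    have hL0 : 0 ≤ C₀ * α / ((blockNorm (m+1) (l+1) k : ℤ) : ℝ) := by positivity
    have hfinal : 2 * (C₀ * α / ((blockNorm (m+1) (l+1) k : ℤ) : ℝ)) * V
        = C₁ * α / ((blockNorm (m+1) (l+1) k : ℤ) : ℝ) := by
      rw [hC₁]; ring
    by_cases hc : (∑ j, |k.2 j|) ≤ (∑ j, |k.1 j|)
    · -- Case A : the first block dominates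
      have hNA : blockNorm (m+1) (l+1) k = ∑ j, |k.1 j| := max_eq_left hc
      obtain ⟨j₀, -, hj₀⟩ := Finset.exists_max_image Finset.univ (fun j => |k.1 j|)
        ⟨0, Finset.mem_univ 0⟩
      have hj₀N : ((blockNorm (m+1) (l+1) k : ℤ) : ℝ) ≤ ((m:ℝ) + 1) * |((k.1 j₀ : ℤ) : ℝ)| := by
        have h1 : blockNorm (m+1) (l+1) k ≤ (m+1) * |k.1 j₀| := by
          rw [hNA]
          calc ∑ j, |k.1 j| ≤ ∑ _j : Fin (m+1), |k.1 j₀| :=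
              Finset.sum_le_sum fun j _ => hj₀ j (Finset.mem_univ j)
            _ = (m+1) * |k.1 j₀| := by
              rw [Finset.sum_const, Finset.card_univ, Fintype.card_fin]
              push_cast; ring
        calc ((blockNorm (m+1) (l+1) k : ℤ) : ℝ) ≤ (((m+1 : ℤ) * |k.1 j₀| : ℤ) : ℝ) := by
              exact_mod_cast h1
          _ = ((m:ℝ)+1) * |((k.1 j₀ : ℤ) : ℝ)| := by push_cast; ring
      have hBmeas : MeasurableSet
          ((Set.univ.pi fun _ : Fin m => Set.Icc (-R) R) ×ˢ
            (Set.univ.pi fun _ : Fin (l+1) => Set.Icc (-R) R)) :=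
        (MeasurableSet.univ_pi fun _ => measurableSet_Icc).prod
          (MeasurableSet.univ_pi fun _ => measurableSet_Icc)
      have hvolB : volume
          ((Set.univ.pi fun _ : Fin m => Set.Icc (-R) R) ×ˢ
            (Set.univ.pi fun _ : Fin (l+1) => Set.Icc (-R) R)) ≤ ENNReal.ofReal V := by
        rw [Measure.volume_eq_prod, Measure.prod_prod, volume_pi_pi, volume_pi_pi]
        simp only [Real.volume_Icc, Finset.prod_const, Finset.card_univ, Fintype.card_fin]
        have h2R : R - -R = 2*R := by ring
        rw [h2R, ← ENNReal.ofReal_pow (by linarith), ← ENNReal.ofReal_pow (by linarith),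
          ← ENNReal.ofReal_mul (by positivity), ← pow_add]
        exact ENNReal.ofReal_le_ofReal (pow_le_pow_right₀ (by linarith) (by omega))
      have hsubA : ∀ x ∈ {σ ∈ O |
          |pairKW (m+1) (l+1) k (freqMap (m+1) (l+1) i σ)| < α},
          ((phiA m (l+1) j₀) x).1 ∈
            ((Set.univ.pi fun _ : Fin m => Set.Icc (-R) R) ×ˢ
              (Set.univ.pi fun _ : Fin (l+1) => Set.Icc (-R) R)) := by
        intro x hx
        obtain ⟨hxO, -⟩ := hx
        exact ⟨fun j _ => Set.mem_Icc.2 (abs_le.1 ((hRO x hxO).1 _)),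
          fun j _ => Set.mem_Icc.2 (abs_le.1 ((hRO x hxO).2 _))⟩
      have hdiamA : ∀ x ∈ {σ ∈ O |
          |pairKW (m+1) (l+1) k (freqMap (m+1) (l+1) i σ)| < α},
          ∀ y ∈ {σ ∈ O |
          |pairKW (m+1) (l+1) k (freqMap (m+1) (l+1) i σ)| < α},
          ((phiA m (l+1) j₀) x).1 = ((phiA m (l+1) j₀) y).1 →
          |((phiA m (l+1) j₀) x).2 - ((phiA m (l+1) j₀) y).2|
            ≤ C₀ * α / ((blockNorm (m+1) (l+1) k : ℤ) : ℝ) := by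
        intro x hx y hy hz
        obtain ⟨hxO, hxlt⟩ := hx
        obtain ⟨hyO, hylt⟩ := hy
        have hz' : (((fun j => x.1 (j₀.succAbove j)), x.2) :
            (Fin m → ℝ) × (Fin (l+1) → ℝ)) = ((fun j => y.1 (j₀.succAbove j)), y.2) := hz
        have e1 : ∀ j, x.1 (j₀.succAbove j) = y.1 (j₀.succAbove j) :=
          fun j => congrFun (congrArg (fun q : (Fin m → ℝ) × (Fin (l+1) → ℝ) => q.1) hz') j
        have e2 : x.2 = y.2 :=
          congrArg (fun q : (Fin m → ℝ) × (Fin (l+1) → ℝ) => q.2) hz'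
        show |x.1 j₀ - y.1 j₀| ≤ C₀ * α / ((blockNorm (m+1) (l+1) k : ℤ) : ℝ)
        have hdec : ∀ σ : (Fin (m+1) → ℝ) × (Fin (l+1) → ℝ),
            pairKW (m+1) (l+1) k (freqMap (m+1) (l+1) i σ)
              = ((k.1 j₀ : ℤ) : ℝ) * σ.1 j₀ +
                ((∑ j, ((k.1 (j₀.succAbove j) : ℤ) : ℝ) * σ.1 (j₀.succAbove j)) +
                  ∑ j, ((k.2 j : ℤ) : ℝ) * Real.sqrt (((i j : ℤ) : ℝ)^2 + σ.2 j)) := by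
          intro σ
          simp only [pairKW, freqMap]
          rw [Fin.sum_univ_succAbove (fun j => ((k.1 j : ℤ) : ℝ) * σ.1 j) j₀]
          ring
        have hxy : pairKW (m+1) (l+1) k (freqMap (m+1) (l+1) i x)
            - pairKW (m+1) (l+1) k (freqMap (m+1) (l+1) i y)
            = ((k.1 j₀ : ℤ) : ℝ) * (x.1 j₀ - y.1 j₀) := by
          rw [hdec x, hdec y, e2]
          have es : (∑ j, ((k.1 (j₀.succAbove j) : ℤ) : ℝ) * x.1 (j₀.succAbove j))
              = ∑ j, ((k.1 (j₀.succAbove j) : ℤ) : ℝ) * y.1 (j₀.succAbove j) :=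
            Finset.sum_congr rfl fun j _ => by rw [e1 j]
          rw [es]; ring
        have habs : |((k.1 j₀ : ℤ) : ℝ)| * |x.1 j₀ - y.1 j₀| < 2 * α := by
          rw [← abs_mul, ← hxy]
          calc |pairKW (m+1) (l+1) k (freqMap (m+1) (l+1) i x)
              - pairKW (m+1) (l+1) k (freqMap (m+1) (l+1) i y)|
              ≤ |pairKW (m+1) (l+1) k (freqMap (m+1) (l+1) i x)|
                + |pairKW (m+1) (l+1) k (freqMap (m+1) (l+1) i y)| := abs_sub _ _
            _ < α + α := add_lt_add hxlt hylt
            _ = 2 * α := by ring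
        rw [le_div_iff₀ hNrpos]
        exact arithA _ _ _ _ _ _ (abs_nonneg _) hα (by positivity) habs.le hj₀N
          (le_max_left _ _)
      calc volume {σ ∈ O |
            |pairKW (m+1) (l+1) k (freqMap (m+1) (l+1) i σ)| < α}
          ≤ ENNReal.ofReal (2 * (C₀ * α / ((blockNorm (m+1) (l+1) k : ℤ) : ℝ))) *
            volume ((Set.univ.pi fun _ : Fin m => Set.Icc (-R) R) ×ˢ
              (Set.univ.pi fun _ : Fin (l+1) => Set.Icc (-R) R)) :=
          vol_le_of_equiv (phiA m (l+1) j₀) (phiA_mp m (l+1) j₀) hSmeas hBmeas hsubA hdiamA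
        _ ≤ ENNReal.ofReal (2 * (C₀ * α / ((blockNorm (m+1) (l+1) k : ℤ) : ℝ))) *
            ENNReal.ofReal V := mul_le_mul_right hvolB _
        _ = ENNReal.ofReal (2 * (C₀ * α / ((blockNorm (m+1) (l+1) k : ℤ) : ℝ)) * V) :=
          (ENNReal.ofReal_mul (by linarith)).symm
        _ = ENNReal.ofReal (C₁ * α / ((blockNorm (m+1) (l+1) k : ℤ) : ℝ)) := by
          rw [hfinal]
    · -- Case B : the second block dominates
      have hNB : blockNorm (m+1) (l+1) k = ∑ j, |k.2 j| := max_eq_right (le_of_not_ge hc)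
      obtain ⟨j₀, -, hj₀⟩ := Finset.exists_max_image Finset.univ (fun j => |k.2 j|)
        ⟨0, Finset.mem_univ 0⟩
      have hj₀N : ((blockNorm (m+1) (l+1) k : ℤ) : ℝ) ≤ ((l:ℝ) + 1) * |((k.2 j₀ : ℤ) : ℝ)| := by
        have h1 : blockNorm (m+1) (l+1) k ≤ (l+1) * |k.2 j₀| := by
          rw [hNB]
          calc ∑ j, |k.2 j| ≤ ∑ _j : Fin (l+1), |k.2 j₀| :=
              Finset.sum_le_sum fun j _ => hj₀ j (Finset.mem_univ j)
            _ = (l+1) * |k.2 j₀| := by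
              rw [Finset.sum_const, Finset.card_univ, Fintype.card_fin]
              push_cast; ring
        calc ((blockNorm (m+1) (l+1) k : ℤ) : ℝ) ≤ (((l+1 : ℤ) * |k.2 j₀| : ℤ) : ℝ) := by
              exact_mod_cast h1
          _ = ((l:ℝ)+1) * |((k.2 j₀ : ℤ) : ℝ)| := by push_cast; ring
      have hBmeas : MeasurableSet
          ((Set.univ.pi fun _ : Fin (m+1) => Set.Icc (-R) R) ×ˢ
            (Set.univ.pi fun _ : Fin l => Set.Icc (-R) R)) :=
        (MeasurableSet.univ_pi fun _ => measurableSet_Icc).prod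
          (MeasurableSet.univ_pi fun _ => measurableSet_Icc)
      have hvolB : volume
          ((Set.univ.pi fun _ : Fin (m+1) => Set.Icc (-R) R) ×ˢ
            (Set.univ.pi fun _ : Fin l => Set.Icc (-R) R)) ≤ ENNReal.ofReal V := by
        rw [Measure.volume_eq_prod, Measure.prod_prod, volume_pi_pi, volume_pi_pi]
        simp only [Real.volume_Icc, Finset.prod_const, Finset.card_univ, Fintype.card_fin]
        have h2R : R - -R = 2*R := by ring
        rw [h2R, ← ENNReal.ofReal_pow (by linarith), ← ENNReal.ofReal_pow (by linarith),
          ← ENNReal.ofReal_mul (by positivity), ← pow_add]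
        exact ENNReal.ofReal_le_ofReal (pow_le_pow_right₀ (by linarith) (by omega))
      have hsubB : ∀ x ∈ {σ ∈ O |
          |pairKW (m+1) (l+1) k (freqMap (m+1) (l+1) i σ)| < α},
          ((phiB (m+1) l j₀) x).1 ∈
            ((Set.univ.pi fun _ : Fin (m+1) => Set.Icc (-R) R) ×ˢ
              (Set.univ.pi fun _ : Fin l => Set.Icc (-R) R)) := by
        intro x hx
        obtain ⟨hxO, -⟩ := hx
        exact ⟨fun j _ => Set.mem_Icc.2 (abs_le.1 ((hRO x hxO).1 _)),
          fun j _ => Set.mem_Icc.2 (abs_le.1 ((hRO x hxO).2 _))⟩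
      have hdiamB : ∀ x ∈ {σ ∈ O |
          |pairKW (m+1) (l+1) k (freqMap (m+1) (l+1) i σ)| < α},
          ∀ y ∈ {σ ∈ O |
          |pairKW (m+1) (l+1) k (freqMap (m+1) (l+1) i σ)| < α},
          ((phiB (m+1) l j₀) x).1 = ((phiB (m+1) l j₀) y).1 →
          |((phiB (m+1) l j₀) x).2 - ((phiB (m+1) l j₀) y).2|
            ≤ C₀ * α / ((blockNorm (m+1) (l+1) k : ℤ) : ℝ) := by
        intro x hx y hy hz
        obtain ⟨hxO, hxlt⟩ := hx
        obtain ⟨hyO, hylt⟩ := hy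
        have hz' : ((x.1, (fun j => x.2 (j₀.succAbove j))) :
            (Fin (m+1) → ℝ) × (Fin l → ℝ)) = (y.1, fun j => y.2 (j₀.succAbove j)) := hz
        have e1 : x.1 = y.1 :=
          congrArg (fun q : (Fin (m+1) → ℝ) × (Fin l → ℝ) => q.1) hz'
        have e2 : ∀ j, x.2 (j₀.succAbove j) = y.2 (j₀.succAbove j) :=
          fun j => congrFun (congrArg (fun q : (Fin (m+1) → ℝ) × (Fin l → ℝ) => q.2) hz') j
        show |x.2 j₀ - y.2 j₀| ≤ C₀ * α / ((blockNorm (m+1) (l+1) k : ℤ) : ℝ)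
        have hdec : ∀ σ : (Fin (m+1) → ℝ) × (Fin (l+1) → ℝ),
            pairKW (m+1) (l+1) k (freqMap (m+1) (l+1) i σ)
              = ((k.2 j₀ : ℤ) : ℝ) * Real.sqrt (((i j₀ : ℤ) : ℝ)^2 + σ.2 j₀) +
                ((∑ j, ((k.1 j : ℤ) : ℝ) * σ.1 j) +
                  ∑ j, ((k.2 (j₀.succAbove j) : ℤ) : ℝ) *
                    Real.sqrt (((i (j₀.succAbove j) : ℤ) : ℝ)^2 + σ.2 (j₀.succAbove j))) := by
          intro σ
          simp only [pairKW, freqMap]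
          rw [Fin.sum_univ_succAbove
            (fun j => ((k.2 j : ℤ) : ℝ) * Real.sqrt (((i j : ℤ) : ℝ)^2 + σ.2 j)) j₀]
          ring
        have hxy : pairKW (m+1) (l+1) k (freqMap (m+1) (l+1) i x)
            - pairKW (m+1) (l+1) k (freqMap (m+1) (l+1) i y)
            = ((k.2 j₀ : ℤ) : ℝ) * (Real.sqrt (((i j₀ : ℤ) : ℝ)^2 + x.2 j₀)
              - Real.sqrt (((i j₀ : ℤ) : ℝ)^2 + y.2 j₀)) := by
          rw [hdec x, hdec y, e1]
          have es : (∑ j, ((k.2 (j₀.succAbove j) : ℤ) : ℝ) *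
                Real.sqrt (((i (j₀.succAbove j) : ℤ) : ℝ)^2 + x.2 (j₀.succAbove j)))
              = ∑ j, ((k.2 (j₀.succAbove j) : ℤ) : ℝ) *
                Real.sqrt (((i (j₀.succAbove j) : ℤ) : ℝ)^2 + y.2 (j₀.succAbove j)) :=
            Finset.sum_congr rfl fun j _ => by rw [e2 j]
          rw [es]; ring
        have habs : |((k.2 j₀ : ℤ) : ℝ)| * |Real.sqrt (((i j₀ : ℤ) : ℝ)^2 + x.2 j₀)
            - Real.sqrt (((i j₀ : ℤ) : ℝ)^2 + y.2 j₀)| < 2 * α := by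
          rw [← abs_mul, ← hxy]
          calc |pairKW (m+1) (l+1) k (freqMap (m+1) (l+1) i x)
              - pairKW (m+1) (l+1) k (freqMap (m+1) (l+1) i y)|
              ≤ |pairKW (m+1) (l+1) k (freqMap (m+1) (l+1) i x)|
                + |pairKW (m+1) (l+1) k (freqMap (m+1) (l+1) i y)| := abs_sub _ _
            _ < α + α := add_lt_add hxlt hylt
            _ = 2 * α := by ring
        have hx2 := hOU hxO j₀
        have hy2 := hOU hyO j₀
        have hu0 : (0:ℝ) ≤ ((i j₀ : ℤ) : ℝ)^2 + x.2 j₀ :=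
          add_nonneg (sq_nonneg _) hx2.1.le
        have hv0 : (0:ℝ) ≤ ((i j₀ : ℤ) : ℝ)^2 + y.2 j₀ :=
          add_nonneg (sq_nonneg _) hy2.1.le
        have hsu : Real.sqrt (((i j₀ : ℤ) : ℝ)^2 + x.2 j₀) ≤ sA :=
          Real.sqrt_le_sqrt (hAj j₀ _ hx2.2.le)
        have hsv : Real.sqrt (((i j₀ : ℤ) : ℝ)^2 + y.2 j₀) ≤ sA :=
          Real.sqrt_le_sqrt (hAj j₀ _ hy2.2.le)
        have h1 : Real.sqrt (((i j₀ : ℤ) : ℝ)^2 + x.2 j₀) ^ 2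
            = ((i j₀ : ℤ) : ℝ)^2 + x.2 j₀ := Real.sq_sqrt hu0
        have h2 : Real.sqrt (((i j₀ : ℤ) : ℝ)^2 + y.2 j₀) ^ 2
            = ((i j₀ : ℤ) : ℝ)^2 + y.2 j₀ := Real.sq_sqrt hv0
        have hfac : x.2 j₀ - y.2 j₀
            = (Real.sqrt (((i j₀ : ℤ) : ℝ)^2 + x.2 j₀)
                - Real.sqrt (((i j₀ : ℤ) : ℝ)^2 + y.2 j₀))
              * (Real.sqrt (((i j₀ : ℤ) : ℝ)^2 + x.2 j₀)
                + Real.sqrt (((i j₀ : ℤ) : ℝ)^2 + y.2 j₀)) := by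
          linear_combination h2 - h1
        rw [le_div_iff₀ hNrpos]
        have hD : |x.2 j₀ - y.2 j₀|
            = |Real.sqrt (((i j₀ : ℤ) : ℝ)^2 + x.2 j₀)
                - Real.sqrt (((i j₀ : ℤ) : ℝ)^2 + y.2 j₀)|
              * (Real.sqrt (((i j₀ : ℤ) : ℝ)^2 + x.2 j₀)
                + Real.sqrt (((i j₀ : ℤ) : ℝ)^2 + y.2 j₀)) := by
          rw [hfac, abs_mul, abs_of_nonneg (add_nonneg (Real.sqrt_nonneg _) (Real.sqrt_nonneg _))]
        have hsum2 : Real.sqrt (((i j₀ : ℤ) : ℝ)^2 + x.2 j₀)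
            + Real.sqrt (((i j₀ : ℤ) : ℝ)^2 + y.2 j₀) ≤ 2 * sA := by linarith
        have hC₀2 : 4*((l:ℝ)+1)*sA ≤ C₀ := le_max_right _ _
        have hsA0 : (0:ℝ) ≤ sA := by linarith
        rw [hD]
        exact arithB _ _ _ _ sA _ _ _ (abs_nonneg _) (abs_nonneg _) hNrpos hα hsA0
          (by positivity) (add_nonneg (Real.sqrt_nonneg _) (Real.sqrt_nonneg _)) hsum2
          habs.le hj₀N hC₀2
      calc volume {σ ∈ O |
            |pairKW (m+1) (l+1) k (freqMap (m+1) (l+1) i σ)| < α}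
          ≤ ENNReal.ofReal (2 * (C₀ * α / ((blockNorm (m+1) (l+1) k : ℤ) : ℝ))) *
            volume ((Set.univ.pi fun _ : Fin (m+1) => Set.Icc (-R) R) ×ˢ
              (Set.univ.pi fun _ : Fin l => Set.Icc (-R) R)) :=
          vol_le_of_equiv (phiB (m+1) l j₀) (phiB_mp (m+1) l j₀) hSmeas hBmeas hsubB hdiamB
        _ ≤ ENNReal.ofReal (2 * (C₀ * α / ((blockNorm (m+1) (l+1) k : ℤ) : ℝ))) *
            ENNReal.ofReal V := mul_le_mul_right hvolB _
        _ = ENNReal.ofReal (2 * (C₀ * α / ((blockNorm (m+1) (l+1) k : ℤ) : ℝ)) * V) :=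
          (ENNReal.ofReal_mul (by linarith)).symm
        _ = ENNReal.ofReal (C₁ * α / ((blockNorm (m+1) (l+1) k : ℤ) : ℝ)) := by
          rw [hfinal]

    -- summability of the weights
  have hd1 : (1:ℝ) ≤ (d:ℝ) := by
    have : 1 ≤ d := by omega
    exact_mod_cast this
  have hp1 : 1 < 1 + 1/(d:ℝ) := by
    have : 0 < 1/(d:ℝ) := by positivity
    linarith
  have hp0 : (0:ℝ) ≤ 1 + 1/(d:ℝ) := by linarith
  have hpd : (1 + 1/(d:ℝ)) * (((m+1) + (l+1) : ℕ) : ℝ) = ((((m+1) + (l+1)) : ℕ) : ℝ) + 1 := by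
    have hdd : ((((m+1) + (l+1)) : ℕ) : ℝ) = (d:ℝ) := by rw [hd]
    rw [hdd]
    field_simp
  have hg0 : ∀ mm : ℤ, 0 ≤ (1 + |(mm:ℝ)|) ^ (-(1 + 1/(d:ℝ))) :=
    fun mm => Real.rpow_nonneg (by positivity) _
  have hgsum : Summable (fun mm : ℤ => (1 + |(mm:ℝ)|) ^ (-(1 + 1/(d:ℝ)))) := summable_g hp1
  have hsum1 : Summable (fun k1 : Fin (m+1) → ℤ =>
      ∏ j, (1 + |((k1 j : ℤ) : ℝ)|) ^ (-(1 + 1/(d:ℝ)))) :=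
    summable_pi_int (g := fun mm : ℤ => (1 + |(mm:ℝ)|) ^ (-(1 + 1/(d:ℝ)))) hg0 hgsum
  have hsum2 : Summable (fun k2 : Fin (l+1) → ℤ =>
      ∏ j, (1 + |((k2 j : ℤ) : ℝ)|) ^ (-(1 + 1/(d:ℝ)))) :=
    summable_pi_int (g := fun mm : ℤ => (1 + |(mm:ℝ)|) ^ (-(1 + 1/(d:ℝ)))) hg0 hgsum
  have hGsum : Summable (fun k : (Fin (m+1) → ℤ) × (Fin (l+1) → ℤ) =>
      (∏ j, (1 + |((k.1 j : ℤ) : ℝ)|) ^ (-(1 + 1/(d:ℝ)))) *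
        ∏ j, (1 + |((k.2 j : ℤ) : ℝ)|) ^ (-(1 + 1/(d:ℝ)))) := by
    have h01 : (0 : (Fin (m+1) → ℤ) → ℝ) ≤
        (fun k1 : Fin (m+1) → ℤ => ∏ j, (1 + |((k1 j : ℤ) : ℝ)|) ^ (-(1 + 1/(d:ℝ)))) :=
      fun k1 => Finset.prod_nonneg fun j _ => hg0 _
    have h02 : (0 : (Fin (l+1) → ℤ) → ℝ) ≤
        (fun k2 : Fin (l+1) → ℤ => ∏ j, (1 + |((k2 j : ℤ) : ℝ)|) ^ (-(1 + 1/(d:ℝ)))) :=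
      fun k2 => Finset.prod_nonneg fun j _ => hg0 _
    have h2 := Summable.mul_of_nonneg
      (f := fun k1 : Fin (m+1) → ℤ => ∏ j, (1 + |((k1 j : ℤ) : ℝ)|) ^ (-(1 + 1/(d:ℝ))))
      (g := fun k2 : Fin (l+1) → ℤ => ∏ j, (1 + |((k2 j : ℤ) : ℝ)|) ^ (-(1 + 1/(d:ℝ))))
      hsum1 hsum2 h01 h02
    exact h2
  have hw0 : ∀ k : (Fin (m+1) → ℤ) × (Fin (l+1) → ℤ),
      0 ≤ (if k = 0 then 0 else
        (((blockNorm (m+1) (l+1) k : ℤ) : ℝ) ^ (d+1))⁻¹) := by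
    intro k
    split
    · exact le_rfl
    · next hkk =>
      have h1 : (1:ℝ) ≤ ((blockNorm (m+1) (l+1) k : ℤ) : ℝ) := by
        exact_mod_cast one_le_blockNorm hkk
      positivity
  have hwsum : Summable (fun k : (Fin (m+1) → ℤ) × (Fin (l+1) → ℤ) =>
      (if k = 0 then 0 else
        (((blockNorm (m+1) (l+1) k : ℤ) : ℝ) ^ (d+1))⁻¹)) := by
    apply Summable.of_nonneg_of_le hw0 (fun k => ?_) (hGsum.mul_left (2^(d+1)))
    by_cases hkk : k = 0
    · simp only [hkk, if_pos]
      positivity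
    · rw [if_neg hkk]
      have := weight_le (n1 := m+1) (n2 := l+1) (1 + 1/(d:ℝ)) hp0 k hkk hpd
      calc (((blockNorm (m+1) (l+1) k : ℤ) : ℝ) ^ (d+1))⁻¹
          = (((blockNorm (m+1) (l+1) k : ℤ) : ℝ) ^ (((m+1)+(l+1))+1))⁻¹ := by rw [hd]
        _ ≤ 2^(((m+1)+(l+1))+1) *
            ((∏ j, (1 + |((k.1 j : ℤ) : ℝ)|) ^ (-(1 + 1/(d:ℝ)))) *
              ∏ j, (1 + |((k.2 j : ℤ) : ℝ)|) ^ (-(1 + 1/(d:ℝ)))) := this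
        _ = 2^(d+1) *
            ((∏ j, (1 + |((k.1 j : ℤ) : ℝ)|) ^ (-(1 + 1/(d:ℝ)))) *
              ∏ j, (1 + |((k.2 j : ℤ) : ℝ)|) ^ (-(1 + 1/(d:ℝ)))) := by rw [hd]
  set K : ℝ := ∑' k : (Fin (m+1) → ℤ) × (Fin (l+1) → ℤ),
    (if k = 0 then 0 else (((blockNorm (m+1) (l+1) k : ℤ) : ℝ) ^ (d+1))⁻¹) with hK
  have hK0 : 0 ≤ K := tsum_nonneg hw0
  refine ⟨C₁ * (K + 1), by positivity, ?_⟩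
  intro γ hγ
  -- the termwise bound for the series
  have hterm : ∀ k : (Fin (m+1) → ℤ) × (Fin (l+1) → ℤ),
      (if k = 0 then 0 else
        volume {σ ∈ O | |pairKW (m+1) (l+1) k (freqMap (m+1) (l+1) i σ)|
          < γ / ((blockNorm (m+1) (l+1) k : ℤ) : ℝ) ^ τ})
      ≤ ENNReal.ofReal ((C₁ * γ) *
          (if k = 0 then 0 else (((blockNorm (m+1) (l+1) k : ℤ) : ℝ) ^ (d+1))⁻¹)) := by
    intro k
    by_cases hkk : k = 0
    · simp [hkk]
    · rw [if_neg hkk, if_neg hkk]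
      have hN1 : 1 ≤ blockNorm (m+1) (l+1) k := one_le_blockNorm hkk
      have hNr1 : (1:ℝ) ≤ ((blockNorm (m+1) (l+1) k : ℤ) : ℝ) := by exact_mod_cast hN1
      have hNrpos : (0:ℝ) < ((blockNorm (m+1) (l+1) k : ℤ) : ℝ) := by linarith
      have hrppos : (0:ℝ) < ((blockNorm (m+1) (l+1) k : ℤ) : ℝ) ^ τ :=
        Real.rpow_pos_of_pos hNrpos τ
      have hαpos : 0 < γ / ((blockNorm (m+1) (l+1) k : ℤ) : ℝ) ^ τ := div_pos hγ hrppos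
      refine le_trans (key k hkk _ hαpos) (ENNReal.ofReal_le_ofReal ?_)
      have hdτ : ((d:ℕ) : ℝ) ≤ τ := by
        rw [hd]
        push_cast
        push_cast at hτ
        linarith
      have hrp : ((blockNorm (m+1) (l+1) k : ℤ) : ℝ) ^ (d:ℕ)
          ≤ ((blockNorm (m+1) (l+1) k : ℤ) : ℝ) ^ τ := by
        rw [← Real.rpow_natCast (((blockNorm (m+1) (l+1) k : ℤ) : ℝ)) d]
        exact Real.rpow_le_rpow_of_exponent_le hNr1 hdτ
      have h1 : γ / ((blockNorm (m+1) (l+1) k : ℤ) : ℝ) ^ τ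
          ≤ γ / ((blockNorm (m+1) (l+1) k : ℤ) : ℝ) ^ (d:ℕ) :=
        div_le_div_of_nonneg_left hγ.le (pow_pos hNrpos d) hrp
      calc C₁ * (γ / ((blockNorm (m+1) (l+1) k : ℤ) : ℝ) ^ τ)
            / ((blockNorm (m+1) (l+1) k : ℤ) : ℝ)
          ≤ C₁ * (γ / ((blockNorm (m+1) (l+1) k : ℤ) : ℝ) ^ (d:ℕ))
            / ((blockNorm (m+1) (l+1) k : ℤ) : ℝ) :=
            (div_le_div_iff_of_pos_right hNrpos).2 (mul_le_mul_of_nonneg_left h1 hC₁pos.le)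
        _ = (C₁ * γ) * ((((blockNorm (m+1) (l+1) k : ℤ) : ℝ)) ^ (d+1))⁻¹ := by
            rw [pow_succ]; ring
  -- the series bound
  have hseries : (∑' k : (Fin (m+1) → ℤ) × (Fin (l+1) → ℤ),
      if k = 0 then 0 else
        volume {σ ∈ O | |pairKW (m+1) (l+1) k (freqMap (m+1) (l+1) i σ)|
          < γ / ((blockNorm (m+1) (l+1) k : ℤ) : ℝ) ^ τ})
      ≤ ENNReal.ofReal (C₁ * (K + 1) * γ) := by
    calc (∑' k : (Fin (m+1) → ℤ) × (Fin (l+1) → ℤ),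
        if k = 0 then 0 else
          volume {σ ∈ O | |pairKW (m+1) (l+1) k (freqMap (m+1) (l+1) i σ)|
            < γ / ((blockNorm (m+1) (l+1) k : ℤ) : ℝ) ^ τ})
        ≤ ∑' k : (Fin (m+1) → ℤ) × (Fin (l+1) → ℤ),
          ENNReal.ofReal ((C₁ * γ) *
            (if k = 0 then 0 else
              (((blockNorm (m+1) (l+1) k : ℤ) : ℝ) ^ (d+1))⁻¹)) :=
          ENNReal.tsum_le_tsum hterm
      _ = ∑' k : (Fin (m+1) → ℤ) × (Fin (l+1) → ℤ),
          ENNReal.ofReal (C₁ * γ) * ENNReal.ofReal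
            (if k = 0 then 0 else
              (((blockNorm (m+1) (l+1) k : ℤ) : ℝ) ^ (d+1))⁻¹) :=
          tsum_congr fun k => ENNReal.ofReal_mul (by positivity)
      _ = ENNReal.ofReal (C₁ * γ) * ∑' k : (Fin (m+1) → ℤ) × (Fin (l+1) → ℤ),
          ENNReal.ofReal
            (if k = 0 then 0 else
              (((blockNorm (m+1) (l+1) k : ℤ) : ℝ) ^ (d+1))⁻¹) :=
          ENNReal.tsum_mul_left
      _ = ENNReal.ofReal (C₁ * γ) * ENNReal.ofReal K := by
          rw [← ENNReal.ofReal_tsum_of_nonneg hw0 hwsum]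
      _ = ENNReal.ofReal ((C₁ * γ) * K) := (ENNReal.ofReal_mul (by positivity)).symm
      _ ≤ ENNReal.ofReal (C₁ * (K + 1) * γ) := by
          apply ENNReal.ofReal_le_ofReal
          nlinarith [hγ.le, hK0, hC₁pos.le]
  refine ⟨hseries, ?_⟩
  -- the union bound
  calc volume {σ ∈ O | ∃ k : (Fin (m+1) → ℤ) × (Fin (l+1) → ℤ), k ≠ 0 ∧
        |pairKW (m+1) (l+1) k (freqMap (m+1) (l+1) i σ)|
          < γ / ((blockNorm (m+1) (l+1) k : ℤ) : ℝ) ^ τ}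
      ≤ volume (⋃ k : (Fin (m+1) → ℤ) × (Fin (l+1) → ℤ),
        (if k = 0 then (∅ : Set ((Fin (m+1) → ℝ) × (Fin (l+1) → ℝ))) else
          {σ ∈ O | |pairKW (m+1) (l+1) k (freqMap (m+1) (l+1) i σ)|
            < γ / ((blockNorm (m+1) (l+1) k : ℤ) : ℝ) ^ τ})) := by
        apply measure_mono
        rintro σ ⟨hσO, k, hkne, hklt⟩
        exact Set.mem_iUnion.2 ⟨k, by rw [if_neg hkne]; exact ⟨hσO, hklt⟩⟩
    _ ≤ ∑' k : (Fin (m+1) → ℤ) × (Fin (l+1) → ℤ),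
        volume (if k = 0 then (∅ : Set ((Fin (m+1) → ℝ) × (Fin (l+1) → ℝ))) else
          {σ ∈ O | |pairKW (m+1) (l+1) k (freqMap (m+1) (l+1) i σ)|
            < γ / ((blockNorm (m+1) (l+1) k : ℤ) : ℝ) ^ τ}) := measure_iUnion_le _
    _ = ∑' k : (Fin (m+1) → ℤ) × (Fin (l+1) → ℤ),
        (if k = 0 then 0 else
          volume {σ ∈ O | |pairKW (m+1) (l+1) k (freqMap (m+1) (l+1) i σ)|
            < γ / ((blockNorm (m+1) (l+1) k : ℤ) : ℝ) ^ τ}) := by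
        refine tsum_congr fun k => ?_
        by_cases hkk : k = 0
        · simp [hkk]
        · rw [if_neg hkk, if_neg hkk]
    _ ≤ ENNReal.ofReal (C₁ * (K + 1) * γ) := hseries
end

section
/- Let ν, b ≥ 1, let i_1,…,i_b be distinct integers, let O be a compact subset of ℝ^ν × (0,1)^b, let ω(σ) = Φ(σ) be the frequency map, set Ω_n = |n| for n ∈ ℤ, and assume τ > ν + b + 2. For k = (k₁,k₂) ∈ ℤ^ν × ℤ^b set |k| = max(|k₁|₁, |k₂|₁). Then there is a constant c, depending only on O, ν, b, τ and max_j |i_j|, such that for every γ ∈ (0,1) and every real K₀ ≥ 1: (i) Leb(⋃_{0<|k|≤K₀} ⋃_{n∈ℤ} ⋃_{s∈{+1,−1}} {σ ∈ O : |⟨k, ω(σ)⟩ + s Ω_n| < γ/K₀^τ}) ≤ c γ, and (ii) Leb(⋃_{0<|k|≤K₀} ⋃_{n∈ℤ} ⋃_{s∈{+1,−1}} {σ ∈ O : |⟨k, ω(σ)⟩ + 2 s Ω_n| < γ Ω_n/K₀^τ}) ≤ c γ. -/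
open MeasureTheory ENNReal

lemma div_le_div_of_nonneg_right' {a b c : ℝ} (h : a ≤ b) (hc : 0 < c) : a / c ≤ b / c := by
  gcongr


lemma vol_le_of_diam_le {s : Set ℝ} {D : ℝ}
    (h : ∀ x ∈ s, ∀ y ∈ s, |x - y| ≤ D) : volume s ≤ ENNReal.ofReal (2*D) := by
  rcases s.eq_empty_or_nonempty with rfl | ⟨t₀, ht₀⟩
  · simp
  · have hsub : s ⊆ Set.Icc (t₀ - D) (t₀ + D) := by
      intro x hx
      have := abs_le.mp (h x hx t₀ ht₀)
      constructor <;> linarith [this.1, this.2]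
    calc volume s ≤ volume (Set.Icc (t₀ - D) (t₀ + D)) := measure_mono hsub
      _ = ENNReal.ofReal (2*D) := by rw [Real.volume_Icc]; ring_nf

lemma pi_slice_bound {d : ℕ} (m : Fin d)
    (S : Set (Fin d → ℝ)) (hS : MeasurableSet S) {R D : ℝ} (hR : 0 ≤ R) (hD : 0 ≤ D)
    (h1 : ∀ x ∈ S, ∀ j, j ≠ m → |x j| ≤ R)
    (h2 : ∀ x ∈ S, ∀ y ∈ S, (∀ j, j ≠ m → x j = y j) → |x m - y m| ≤ D) :
    volume S ≤ ENNReal.ofReal (2*R) ^ (d - 1) * ENNReal.ofReal (2*D) := by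
  obtain ⟨d, rfl⟩ : ∃ d', d = d' + 1 := ⟨d - 1, by have := m.pos; omega⟩
  simp only [Nat.add_sub_cancel]
  set e := MeasurableEquiv.piFinSuccAbove (fun _ : Fin (d+1) => ℝ) m with he
  have hmp := volume_preserving_piFinSuccAbove (fun _ : Fin (d+1) => ℝ) m
  have hvol : volume S = volume (e.symm ⁻¹' S) :=
    ((MeasurePreserving.symm e hmp).measure_preimage hS.nullMeasurableSet).symm
  set T : Set _ := e.symm ⁻¹' S with hT
  have hTm : MeasurableSet T := e.symm.measurable hS
  rw [hvol, Measure.volume_eq_prod, Measure.prod_apply_symm hTm]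
  have hsymm_m : ∀ (t : ℝ) (z : Fin d → ℝ), e.symm (t, z) m = t := by
    intro t z; exact Fin.insertNth_apply_same (α := fun _ => ℝ) m t z
  have hsymm_o : ∀ (t : ℝ) (z : Fin d → ℝ) (j : Fin d),
      e.symm (t, z) (m.succAbove j) = z j := by
    intro t z j; exact Fin.insertNth_apply_succAbove (α := fun _ => ℝ) m t z j
  set cube : Set (Fin d → ℝ) := Set.univ.pi fun _ => Set.Icc (-R) R with hcube
  have hcubem : MeasurableSet cube := MeasurableSet.univ_pi fun _ => measurableSet_Icc
  have hmono : ∀ z, volume ((fun t => (t, z)) ⁻¹' T)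
      ≤ cube.indicator (fun _ => ENNReal.ofReal (2*D)) z := by
    intro z
    rcases Set.eq_empty_or_nonempty ((fun t => (t, z)) ⁻¹' T) with hemp | ⟨t₀, ht₀⟩
    · rw [hemp]; simp
    · have hx₀ : e.symm (t₀, z) ∈ S := ht₀
      have hzc : z ∈ cube := by
        intro j _
        have hx := h1 _ hx₀ (m.succAbove j) (Fin.succAbove_ne m j)
        rw [hsymm_o] at hx
        exact Set.mem_Icc.mpr (abs_le.mp hx)
      rw [Set.indicator_of_mem hzc]
      apply vol_le_of_diam_le
      intro t1 h1' t2 h2'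
      have hx1 : e.symm (t1, z) ∈ S := h1'
      have hx2 : e.symm (t2, z) ∈ S := h2'
      have hagree : ∀ j, j ≠ m → e.symm (t1, z) j = e.symm (t2, z) j := by
        intro j hj
        obtain ⟨j', rfl⟩ := Fin.exists_succAbove_eq hj
        rw [hsymm_o, hsymm_o]
      have := h2 _ hx1 _ hx2 hagree
      rwa [hsymm_m, hsymm_m] at this
  calc ∫⁻ z, volume ((fun t => (t, z)) ⁻¹' T)
      ≤ ∫⁻ z, cube.indicator (fun _ => ENNReal.ofReal (2*D)) z := lintegral_mono hmono
    _ = ENNReal.ofReal (2*D) * volume cube := lintegral_indicator_const hcubem _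
    _ = ENNReal.ofReal (2*R) ^ d * ENNReal.ofReal (2*D) := by
        rw [hcube, volume_pi_pi]
        simp only [Real.volume_Icc, sub_neg_eq_add, Finset.prod_const, Finset.card_univ,
          Fintype.card_fin]
        rw [mul_comm]
        congr 2
        ring

lemma prod_slice_bound (ν b : ℕ) (S : Set ((Fin ν → ℝ) × (Fin b → ℝ)))
    (hS : MeasurableSet S) {R D : ℝ} (hR : 0 ≤ R) (hD : 0 ≤ D) (m : Fin ν ⊕ Fin b)
    (h1 : ∀ σ ∈ S, (∀ j, Sum.inl j ≠ m → |σ.1 j| ≤ R) ∧ (∀ j, Sum.inr j ≠ m → |σ.2 j| ≤ R))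
    (h2 : ∀ σ ∈ S, ∀ σ' ∈ S, (∀ j, Sum.inl j ≠ m → σ.1 j = σ'.1 j) →
      (∀ j, Sum.inr j ≠ m → σ.2 j = σ'.2 j) →
      |Sum.elim σ.1 σ.2 m - Sum.elim σ'.1 σ'.2 m| ≤ D) :
    volume S ≤ ENNReal.ofReal (2*R) ^ (ν + b - 1) * ENNReal.ofReal (2*D) := by
  classical
  set f := (finSumFinEquiv : Fin ν ⊕ Fin b ≃ Fin (ν + b)) with hf
  set Q := ((MeasurableEquiv.piCongrLeft (fun _ : Fin (ν+b) => ℝ) f).symm).trans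
      (MeasurableEquiv.sumPiEquivProdPi (fun _ : Fin ν ⊕ Fin b => ℝ)) with hQ
  have hQmp : MeasurePreserving (⇑Q) volume volume :=
    (volume_measurePreserving_sumPiEquivProdPi (fun _ : Fin ν ⊕ Fin b => ℝ)).comp
      (MeasurePreserving.symm _ (volume_measurePreserving_piCongrLeft (fun _ : Fin (ν+b) => ℝ) f))
  have hQ1 : ∀ (x : Fin (ν+b) → ℝ) (j : Fin ν), (Q x).1 j = x (f (Sum.inl j)) := by
    intro x j
    simp [hQ, MeasurableEquiv.sumPiEquivProdPi, MeasurableEquiv.piCongrLeft,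
      Equiv.sumPiEquivProdPi, Equiv.piCongrLeft]
  have hQ2 : ∀ (x : Fin (ν+b) → ℝ) (j : Fin b), (Q x).2 j = x (f (Sum.inr j)) := by
    intro x j
    simp [hQ, MeasurableEquiv.sumPiEquivProdPi, MeasurableEquiv.piCongrLeft,
      Equiv.sumPiEquivProdPi, Equiv.piCongrLeft]
  have hQel : ∀ (x : Fin (ν+b) → ℝ) (s : Fin ν ⊕ Fin b),
      Sum.elim (Q x).1 (Q x).2 s = x (f s) := by
    rintro x (j | j)
    · exact hQ1 x j
    · exact hQ2 x j
  have hvol : volume S = volume (Q ⁻¹' S) :=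
    (hQmp.measure_preimage hS.nullMeasurableSet).symm
  rw [hvol]
  apply pi_slice_bound (f m) _ (Q.measurable hS) hR hD
  · intro x hx j' hj'
    have hxS : Q x ∈ S := hx
    obtain ⟨s, rfl⟩ : ∃ s, f s = j' := ⟨f.symm j', f.apply_symm_apply j'⟩
    have hsm : s ≠ m := fun h => hj' (by rw [h])
    rcases s with j | j
    · have := (h1 _ hxS).1 j hsm
      rwa [hQ1] at this
    · have := (h1 _ hxS).2 j hsm
      rwa [hQ2] at this
  · intro x hx y hy hagree
    have hxS : Q x ∈ S := hx
    have hyS : Q y ∈ S := hy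
    have ha1 : ∀ j, Sum.inl j ≠ m → (Q x).1 j = (Q y).1 j := by
      intro j hj
      rw [hQ1, hQ1]
      exact hagree _ (fun h => hj (f.injective h))
    have ha2 : ∀ j, Sum.inr j ≠ m → (Q x).2 j = (Q y).2 j := by
      intro j hj
      rw [hQ2, hQ2]
      exact hagree _ (fun h => hj (f.injective h))
    have := h2 _ hxS _ hyS ha1 ha2
    rwa [hQel, hQel] at this

lemma single_set_bound (ν b : ℕ) (i : Fin b → ℤ)
    (O : Set ((Fin ν → ℝ) × (Fin b → ℝ))) (hOm : MeasurableSet O)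
    (r sB : ℝ) (hr : 0 ≤ r) (hsB : 1 ≤ sB)
    (hOr : ∀ σ ∈ O, ∀ j, |σ.1 j| ≤ r)
    (hO2 : ∀ σ ∈ O, ∀ j, σ.2 j ∈ Set.Ioo (0:ℝ) 1)
    (hiB : ∀ (j : Fin b) (t : ℝ), t ∈ Set.Ioo (0:ℝ) 1 → Real.sqrt ((i j:ℝ)^2 + t) ≤ sB)
    (k : (Fin ν → ℤ) × (Fin b → ℤ)) (hk : 0 < blockNorm ν b k) (a ε : ℝ) (hε : 0 ≤ ε) :
    volume {σ ∈ O | |pairKW ν b k (freqMap ν b i σ) + a| < ε}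
      ≤ ENNReal.ofReal (2*(r+sB)) ^ (ν+b-1) * ENNReal.ofReal (2*((2+4*sB)*ε)) := by
  have hcont : Continuous fun σ : (Fin ν → ℝ) × (Fin b → ℝ) =>
      pairKW ν b k (freqMap ν b i σ) := by
    unfold pairKW freqMap
    apply Continuous.add
    · exact continuous_finset_sum _ fun j _ =>
        continuous_const.mul ((continuous_apply j).comp continuous_fst)
    · exact continuous_finset_sum _ fun j _ =>
        continuous_const.mul ((continuous_const.add
          ((continuous_apply j).comp continuous_snd)).sqrt)
  set S := {σ ∈ O | |pairKW ν b k (freqMap ν b i σ) + a| < ε} with hSdef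
  have hSm : MeasurableSet S := by
    have : S = O ∩ (fun σ => |pairKW ν b k (freqMap ν b i σ) + a|) ⁻¹' Set.Iio ε := by
      ext σ; simp [hSdef, Set.mem_sep_iff]
    rw [this]
    exact hOm.inter (((hcont.add continuous_const).abs).measurable measurableSet_Iio)
  have hR : (0:ℝ) ≤ r + sB := by linarith
  have hD : (0:ℝ) ≤ (2+4*sB)*ε := mul_nonneg (by linarith) hε
  have hSsub : ∀ σ ∈ S, σ ∈ O := fun σ hσ => hσ.1
  have hb1 : ∀ σ ∈ S, ∀ j, |σ.1 j| ≤ r + sB := fun σ hσ j =>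
    (hOr σ hσ.1 j).trans (by linarith)
  have hb2 : ∀ σ ∈ S, ∀ j, |σ.2 j| ≤ r + sB := by
    intro σ hσ j
    have := hO2 σ hσ.1 j
    rw [abs_of_pos this.1]
    linarith [this.2]
  -- existence of a nonzero component
  have hex : (∃ j, k.1 j ≠ 0) ∨ (∃ j, k.2 j ≠ 0) := by
    by_contra h
    push_neg at h
    have h1 : ∑ j, |k.1 j| = 0 := Finset.sum_eq_zero fun j _ => by rw [h.1 j]; simp
    have h2 : ∑ j, |k.2 j| = 0 := Finset.sum_eq_zero fun j _ => by rw [h.2 j]; simp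
    rw [blockNorm, h1, h2] at hk
    simp at hk
  rcases hex with ⟨j₀, hj₀⟩ | ⟨j₀, hj₀⟩
  · -- slice in the first block
    apply prod_slice_bound ν b S hSm hR hD (Sum.inl j₀)
    · exact fun σ hσ => ⟨fun j _ => hb1 σ hσ j, fun j _ => hb2 σ hσ j⟩
    · intro σ hσ σ' hσ' ha1 ha2
      simp only [Sum.elim_inl]
      have h2eq : ∀ j, σ.2 j = σ'.2 j := fun j => ha2 j (by simp)
      have hdiff : pairKW ν b k (freqMap ν b i σ) - pairKW ν b k (freqMap ν b i σ')
          = (k.1 j₀ : ℝ) * (σ.1 j₀ - σ'.1 j₀) := by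
        unfold pairKW freqMap
        have e2 : ∑ j, (k.2 j : ℝ) * Real.sqrt ((i j:ℝ)^2 + σ.2 j)
            = ∑ j, (k.2 j : ℝ) * Real.sqrt ((i j:ℝ)^2 + σ'.2 j) :=
          Finset.sum_congr rfl fun j _ => by rw [h2eq j]
        simp only [e2]
        have e1 : ∑ j, (k.1 j : ℝ) * σ.1 j - ∑ j, (k.1 j : ℝ) * σ'.1 j
            = ∑ j, (k.1 j : ℝ) * (σ.1 j - σ'.1 j) := by
          rw [← Finset.sum_sub_distrib]
          exact Finset.sum_congr rfl fun j _ => by ring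
        have e3 : ∑ j, (k.1 j : ℝ) * (σ.1 j - σ'.1 j) = (k.1 j₀ : ℝ) * (σ.1 j₀ - σ'.1 j₀) := by
          apply Finset.sum_eq_single
          · intro j _ hj
            rw [ha1 j (by simp [hj])]
            ring
          · intro h; exact absurd (Finset.mem_univ j₀) h
        rw [← e3, ← e1]
        ring
      have hlt : |pairKW ν b k (freqMap ν b i σ) - pairKW ν b k (freqMap ν b i σ')| < 2*ε := by
        have l1 := hσ.2
        have l2 := hσ'.2
        calc |pairKW ν b k (freqMap ν b i σ) - pairKW ν b k (freqMap ν b i σ')|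
            = |(pairKW ν b k (freqMap ν b i σ) + a) - (pairKW ν b k (freqMap ν b i σ') + a)| := by
              ring_nf
          _ ≤ |pairKW ν b k (freqMap ν b i σ) + a| + |pairKW ν b k (freqMap ν b i σ') + a| :=
              abs_sub _ _
          _ < 2*ε := by linarith
      rw [hdiff, abs_mul] at hlt
      have hk1 : (1:ℝ) ≤ |(k.1 j₀ : ℝ)| := by
        rw [← Int.cast_abs]
        exact_mod_cast Int.one_le_abs hj₀
      have : |σ.1 j₀ - σ'.1 j₀| ≤ 2*ε := by
        nlinarith [abs_nonneg (σ.1 j₀ - σ'.1 j₀)]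
      calc |σ.1 j₀ - σ'.1 j₀| ≤ 2*ε := this
        _ ≤ (2+4*sB)*ε := by nlinarith
  · -- slice in the second block
    apply prod_slice_bound ν b S hSm hR hD (Sum.inr j₀)
    · exact fun σ hσ => ⟨fun j _ => hb1 σ hσ j, fun j _ => hb2 σ hσ j⟩
    · intro σ hσ σ' hσ' ha1 ha2
      simp only [Sum.elim_inr]
      have h1eq : ∀ j, σ.1 j = σ'.1 j := fun j => ha1 j (by simp)
      set u := Real.sqrt ((i j₀:ℝ)^2 + σ.2 j₀) with hu
      set u' := Real.sqrt ((i j₀:ℝ)^2 + σ'.2 j₀) with hu'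
      have hdiff : pairKW ν b k (freqMap ν b i σ) - pairKW ν b k (freqMap ν b i σ')
          = (k.2 j₀ : ℝ) * (u - u') := by
        unfold pairKW freqMap
        have e1 : ∑ j, (k.1 j : ℝ) * σ.1 j = ∑ j, (k.1 j : ℝ) * σ'.1 j :=
          Finset.sum_congr rfl fun j _ => by rw [h1eq j]
        simp only [e1]
        have e2 : ∑ j, (k.2 j : ℝ) * Real.sqrt ((i j:ℝ)^2 + σ.2 j)
              - ∑ j, (k.2 j : ℝ) * Real.sqrt ((i j:ℝ)^2 + σ'.2 j)
            = ∑ j, (k.2 j : ℝ) * (Real.sqrt ((i j:ℝ)^2 + σ.2 j)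
              - Real.sqrt ((i j:ℝ)^2 + σ'.2 j)) := by
          rw [← Finset.sum_sub_distrib]
          exact Finset.sum_congr rfl fun j _ => by ring
        have e3 : ∑ j, (k.2 j : ℝ) * (Real.sqrt ((i j:ℝ)^2 + σ.2 j)
              - Real.sqrt ((i j:ℝ)^2 + σ'.2 j)) = (k.2 j₀ : ℝ) * (u - u') := by
          apply Finset.sum_eq_single
          · intro j _ hj
            rw [ha2 j (by simp [hj])]
            ring
          · intro h; exact absurd (Finset.mem_univ j₀) h
        rw [← e3, ← e2]
        ring
      have hlt : |pairKW ν b k (freqMap ν b i σ) - pairKW ν b k (freqMap ν b i σ')| < 2*ε := by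
        have l1 := hσ.2
        have l2 := hσ'.2
        calc |pairKW ν b k (freqMap ν b i σ) - pairKW ν b k (freqMap ν b i σ')|
            = |(pairKW ν b k (freqMap ν b i σ) + a) - (pairKW ν b k (freqMap ν b i σ') + a)| := by
              ring_nf
          _ ≤ |pairKW ν b k (freqMap ν b i σ) + a| + |pairKW ν b k (freqMap ν b i σ') + a| :=
              abs_sub _ _
          _ < 2*ε := by linarith
      rw [hdiff, abs_mul] at hlt
      have hk2 : (1:ℝ) ≤ |(k.2 j₀ : ℝ)| := by
        rw [← Int.cast_abs]
        exact_mod_cast Int.one_le_abs hj₀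
      have huu' : |u - u'| ≤ 2*ε := by
        nlinarith [abs_nonneg (u - u')]
      have hts : σ.2 j₀ ∈ Set.Ioo (0:ℝ) 1 := hO2 σ hσ.1 j₀
      have hts' : σ'.2 j₀ ∈ Set.Ioo (0:ℝ) 1 := hO2 σ' hσ'.1 j₀
      have hu0 : 0 ≤ u := Real.sqrt_nonneg _
      have hu0' : 0 ≤ u' := Real.sqrt_nonneg _
      have huB : u ≤ sB := hiB j₀ _ hts
      have huB' : u' ≤ sB := hiB j₀ _ hts'
      have hsq : u^2 = (i j₀:ℝ)^2 + σ.2 j₀ :=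
        Real.sq_sqrt (by nlinarith [sq_nonneg ((i j₀:ℝ)), hts.1])
      have hsq' : u'^2 = (i j₀:ℝ)^2 + σ'.2 j₀ :=
        Real.sq_sqrt (by nlinarith [sq_nonneg ((i j₀:ℝ)), hts'.1])
      have hsub : σ.2 j₀ - σ'.2 j₀ = (u + u') * (u - u') := by nlinarith
      calc |σ.2 j₀ - σ'.2 j₀| = |u + u'| * |u - u'| := by rw [hsub, abs_mul]
        _ ≤ (2*sB) * (2*ε) := by
            apply mul_le_mul _ huu' (abs_nonneg _) (by linarith)
            rw [abs_of_nonneg (by linarith)]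
            linarith
        _ ≤ (2+4*sB)*ε := by nlinarith

set_option maxHeartbeats 1000000 in
/-- first/second Melnikov measure estimates for assumption (A3) with the
normal frequencies `Ω_n = |n|`: the unions over `0 < |k| ≤ K₀`, `n ∈ ℤ`, `s = ±1` of
`{σ ∈ O : |⟨k,ω(σ)⟩ + sΩ_n| < γ/K₀^τ}` and of
`{σ ∈ O : |⟨k,ω(σ)⟩ + 2sΩ_n| < γΩ_n/K₀^τ}` have measure `≤ cγ`. -/
theorem melnikov_measure_estimates (ν b : ℕ) (hν : 1 ≤ ν) (hb : 1 ≤ b)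
    (i : Fin b → ℤ) (hi : Function.Injective i)
    (O : Set ((Fin ν → ℝ) × (Fin b → ℝ))) (hOc : IsCompact O)
    (hOU : O ⊆ freqDomain ν b)
    (τ : ℝ) (hτ : ((ν : ℝ) + b + 2) < τ) :
    ∃ c : ℝ, 0 < c ∧ ∀ γ : ℝ, 0 < γ → γ < 1 → ∀ K₀ : ℝ, 1 ≤ K₀ →
      (volume {σ ∈ O | ∃ (k : (Fin ν → ℤ) × (Fin b → ℤ)) (n : ℤ) (s : ℝ),
          (s = 1 ∨ s = -1) ∧ 0 < blockNorm ν b k ∧ (blockNorm ν b k : ℝ) ≤ K₀ ∧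
          abs (pairKW ν b k (freqMap ν b i σ) + s * |(n : ℝ)|) < γ / K₀ ^ τ}
        ≤ ENNReal.ofReal (c * γ)) ∧
      (volume {σ ∈ O | ∃ (k : (Fin ν → ℤ) × (Fin b → ℤ)) (n : ℤ) (s : ℝ),
          (s = 1 ∨ s = -1) ∧ 0 < blockNorm ν b k ∧ (blockNorm ν b k : ℝ) ≤ K₀ ∧
          abs (pairKW ν b k (freqMap ν b i σ) + 2 * s * |(n : ℝ)|) < γ * |(n : ℝ)| / K₀ ^ τ}
        ≤ ENNReal.ofReal (c * γ)) := by
  classical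
  set d := ν + b with hd
  have hd1 : 1 ≤ d := by omega
  -- bounds from compactness
  obtain ⟨r₀, hr₀⟩ := hOc.isBounded.subset_closedBall 0
  set r : ℝ := max r₀ 0 with hrdef
  have hr : 0 ≤ r := le_max_right _ _
  have hOr : ∀ σ ∈ O, ∀ j, |σ.1 j| ≤ r := by
    intro σ hσ j
    have h1 : ‖σ‖ ≤ r₀ := by
      simpa [Metric.mem_closedBall, dist_zero_right] using hr₀ hσ
    have h2 : |σ.1 j| ≤ ‖σ.1‖ := by simpa using norm_le_pi_norm σ.1 j
    have h3 : ‖σ.1‖ ≤ ‖σ‖ := norm_fst_le σ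
    calc |σ.1 j| ≤ ‖σ‖ := h2.trans h3
      _ ≤ r₀ := h1
      _ ≤ r := le_max_left _ _
  have hO2 : ∀ σ ∈ O, ∀ j, σ.2 j ∈ Set.Ioo (0:ℝ) 1 := fun σ hσ j => hOU hσ j
  set B : ℝ := (∑ j, ((i j : ℝ))^2) + 1 with hBdef
  have hB1 : 1 ≤ B := by
    have : 0 ≤ ∑ j, ((i j : ℝ))^2 := Finset.sum_nonneg fun j _ => sq_nonneg _
    linarith
  set sB := Real.sqrt B with hsBdef
  have hsB : 1 ≤ sB := by
    rw [show (1:ℝ) = Real.sqrt 1 by simp]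
    exact Real.sqrt_le_sqrt hB1
  have hiB : ∀ (j : Fin b) (t : ℝ), t ∈ Set.Ioo (0:ℝ) 1 →
      Real.sqrt ((i j:ℝ)^2 + t) ≤ sB := by
    intro j t ht
    apply Real.sqrt_le_sqrt
    have hle : (i j:ℝ)^2 ≤ ∑ j', ((i j' : ℝ))^2 :=
      Finset.single_le_sum (fun j' _ => sq_nonneg ((i j' : ℝ))) (Finset.mem_univ j)
    linarith [ht.2]
  set R := r + sB with hRdef
  have hR1 : 1 ≤ R := by linarith
  have hR0 : 0 < R := by linarith
  -- the constant
  set c : ℝ := (3:ℝ)^d * (7*R) * 2 * (2*R)^(d-1) * (2*(2+4*sB)) * (3*R) with hcdef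
  have hc : 0 < c := by
    have h1 : (0:ℝ) < 3^d := by positivity
    have h2 : (0:ℝ) < 7*R := by linarith
    have h3 : (0:ℝ) < (2*R)^(d-1) := pow_pos (by linarith) _
    have h4 : (0:ℝ) < 2*(2+4*sB) := by linarith
    have h5 : (0:ℝ) < 3*R := by linarith
    exact mul_pos (mul_pos (mul_pos (mul_pos (mul_pos h1 h2) two_pos) h3) h4) h5
  refine ⟨c, hc, ?_⟩
  intro γ hγ hγ1 K₀ hK₀
  have hK0pos : (0:ℝ) < K₀ := by linarith
  have hKτpos : (0:ℝ) < K₀ ^ τ := Real.rpow_pos_of_pos hK0pos τ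
  have hτ0 : (0:ℝ) ≤ τ := by
    have : (0:ℝ) ≤ (ν:ℝ) + b + 2 := by positivity
    linarith
  have hKτ1 : (1:ℝ) ≤ K₀ ^ τ := Real.one_le_rpow hK₀ hτ0
  have hγK : γ / K₀ ^ τ ≤ 1 := by
    rw [div_le_one hKτpos]; linarith
  -- pairing bound
  have hpair : ∀ σ ∈ O, ∀ k : (Fin ν → ℤ) × (Fin b → ℤ),
      (blockNorm ν b k : ℝ) ≤ K₀ → |pairKW ν b k (freqMap ν b i σ)| ≤ K₀ * R := by
    intro σ hσ k hkK
    have s1 : (∑ j, |(k.1 j : ℝ)|) ≤ K₀ := by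
      have h1 : ((∑ j, |k.1 j| : ℤ) : ℝ) ≤ ((blockNorm ν b k : ℤ) : ℝ) := by
        exact_mod_cast le_max_left (∑ j, |k.1 j|) (∑ j, |k.2 j|)
      calc (∑ j, |(k.1 j : ℝ)|) = ((∑ j, |k.1 j| : ℤ) : ℝ) := by push_cast; ring
        _ ≤ _ := h1.trans hkK
    have s2 : (∑ j, |(k.2 j : ℝ)|) ≤ K₀ := by
      have h1 : ((∑ j, |k.2 j| : ℤ) : ℝ) ≤ ((blockNorm ν b k : ℤ) : ℝ) := by
        exact_mod_cast le_max_right (∑ j, |k.1 j|) (∑ j, |k.2 j|)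
      calc (∑ j, |(k.2 j : ℝ)|) = ((∑ j, |k.2 j| : ℤ) : ℝ) := by push_cast; ring
        _ ≤ _ := h1.trans hkK
    have t1 : |∑ j, (k.1 j : ℝ) * σ.1 j| ≤ (∑ j, |(k.1 j : ℝ)|) * r := by
      calc |∑ j, (k.1 j : ℝ) * σ.1 j| ≤ ∑ j, |(k.1 j : ℝ) * σ.1 j| :=
            Finset.abs_sum_le_sum_abs _ _
        _ ≤ ∑ j, |(k.1 j : ℝ)| * r := Finset.sum_le_sum fun j _ => by
            rw [abs_mul]
            exact mul_le_mul_of_nonneg_left (hOr σ hσ j) (abs_nonneg _)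
        _ = (∑ j, |(k.1 j : ℝ)|) * r := by rw [Finset.sum_mul]
    have t2 : |∑ j, (k.2 j : ℝ) * Real.sqrt ((i j:ℝ)^2 + σ.2 j)|
        ≤ (∑ j, |(k.2 j : ℝ)|) * sB := by
      calc |∑ j, (k.2 j : ℝ) * Real.sqrt ((i j:ℝ)^2 + σ.2 j)|
          ≤ ∑ j, |(k.2 j : ℝ) * Real.sqrt ((i j:ℝ)^2 + σ.2 j)| :=
            Finset.abs_sum_le_sum_abs _ _
        _ ≤ ∑ j, |(k.2 j : ℝ)| * sB := Finset.sum_le_sum fun j _ => by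
            rw [abs_mul]
            refine mul_le_mul_of_nonneg_left ?_ (abs_nonneg _)
            rw [abs_of_nonneg (Real.sqrt_nonneg _)]
            exact hiB j _ (hO2 σ hσ j)
        _ = (∑ j, |(k.2 j : ℝ)|) * sB := by rw [Finset.sum_mul]
    have habs : |pairKW ν b k (freqMap ν b i σ)|
        ≤ (∑ j, |(k.1 j : ℝ)|) * r + (∑ j, |(k.2 j : ℝ)|) * sB := by
      unfold pairKW freqMap
      exact (abs_add_le _ _).trans (add_le_add t1 t2)
    have hsum1 : (0:ℝ) ≤ ∑ j, |(k.1 j : ℝ)| := Finset.sum_nonneg fun j _ => abs_nonneg _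
    have hsum2 : (0:ℝ) ≤ ∑ j, |(k.2 j : ℝ)| := Finset.sum_nonneg fun j _ => abs_nonneg _
    have hsB0 : (0:ℝ) ≤ sB := by linarith
    calc |pairKW ν b k (freqMap ν b i σ)| ≤ (∑ j, |(k.1 j : ℝ)|) * r
          + (∑ j, |(k.2 j : ℝ)|) * sB := habs
      _ ≤ K₀ * r + K₀ * sB := add_le_add
          (mul_le_mul_of_nonneg_right s1 hr) (mul_le_mul_of_nonneg_right s2 hsB0)
      _ = K₀ * R := by rw [hRdef]; ring
  -- finsets
  set K : ℤ := ⌊K₀⌋ with hKdef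
  have hK1 : 1 ≤ K := by
    rw [hKdef]; exact_mod_cast Int.le_floor.mpr (by exact_mod_cast hK₀)
  set N : ℤ := ⌈2*R*K₀⌉ with hNdef
  have hNreal : 2*R*K₀ ≤ (N:ℝ) := Int.le_ceil _
  have hN1 : 1 ≤ N := by
    have h2 : (1:ℝ) ≤ 2*R*K₀ := by nlinarith
    exact_mod_cast Int.le_floor.mp (Int.le_floor.mpr (by exact_mod_cast h2.trans hNreal))
  set KF : Finset ((Fin ν → ℤ) × (Fin b → ℤ)) :=
    (Fintype.piFinset fun _ : Fin ν => Finset.Icc (-K) K) ×ˢ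
      (Fintype.piFinset fun _ : Fin b => Finset.Icc (-K) K) with hKF
  set KF' : Finset ((Fin ν → ℤ) × (Fin b → ℤ)) :=
    KF.filter (fun k => 0 < blockNorm ν b k) with hKF'
  set NF : Finset ℤ := Finset.Icc (-N) N with hNF
  set SF : Finset ℝ := {1, -1} with hSF
  have hSFcard : SF.card = 2 := by
    rw [hSF]
    rw [Finset.card_insert_of_notMem (by norm_num)]
    simp
  -- card bounds (real)
  have hIccK : ((Finset.Icc (-K) K).card : ℝ) ≤ 3*K₀ := by
    have h1 : (Finset.Icc (-K) K).card = (2*K+1).toNat := by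
      rw [Int.card_Icc]
      congr 1
      ring
    have h2 : ((2*K+1).toNat : ℝ) = ((2*K+1 : ℤ) : ℝ) := by
      exact_mod_cast congrArg (Int.cast : ℤ → ℝ) (Int.toNat_of_nonneg (by linarith : (0:ℤ) ≤ 2*K+1))
    rw [h1, h2]
    push_cast
    have : (K:ℝ) ≤ K₀ := Int.floor_le K₀
    nlinarith
  have hcardK : ((KF'.card : ℕ) : ℝ) ≤ (3*K₀)^d := by
    have h0 : KF'.card ≤ KF.card := Finset.card_filter_le _ _
    have h1 : KF.card = ((Finset.Icc (-K) K).card)^ν * ((Finset.Icc (-K) K).card)^b := by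
      rw [hKF, Finset.card_product, Fintype.card_piFinset, Fintype.card_piFinset]
      simp [Finset.prod_const]
    have h3 : (0:ℝ) ≤ ((Finset.Icc (-K) K).card : ℝ) := Nat.cast_nonneg _
    calc ((KF'.card : ℕ) : ℝ) ≤ (KF.card : ℝ) := by exact_mod_cast h0
      _ = (((Finset.Icc (-K) K).card : ℝ))^ν * (((Finset.Icc (-K) K).card : ℝ))^b := by
          rw [h1]; push_cast; ring
      _ ≤ (3*K₀)^ν * (3*K₀)^b := by
          apply mul_le_mul (pow_le_pow_left₀ h3 hIccK ν) (pow_le_pow_left₀ h3 hIccK b)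
            (by positivity) (by positivity)
      _ = (3*K₀)^d := by rw [hd, pow_add]
  have hcardN : ((NF.card : ℕ) : ℝ) ≤ 7*R*K₀ := by
    have h1 : NF.card = (2*N+1).toNat := by
      rw [hNF, Int.card_Icc]
      congr 1
      ring
    have h2 : ((2*N+1).toNat : ℝ) = ((2*N+1 : ℤ) : ℝ) := by
      exact_mod_cast congrArg (Int.cast : ℤ → ℝ) (Int.toNat_of_nonneg (by linarith : (0:ℤ) ≤ 2*N+1))
    rw [h1, h2]
    push_cast
    have hNupper : (N:ℝ) < 2*R*K₀ + 1 := Int.ceil_lt_add_one _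
    have hRK : (1:ℝ) ≤ R*K₀ := by nlinarith
    linarith
  have hkmem : ∀ k : (Fin ν → ℤ) × (Fin b → ℤ), 0 < blockNorm ν b k →
      (blockNorm ν b k : ℝ) ≤ K₀ → k ∈ KF' := by
    intro k hkpos hkle
    rw [hKF', Finset.mem_filter]
    refine ⟨?_, hkpos⟩
    rw [hKF, Finset.mem_product]
    have hcomp : ∀ (x : ℤ), |x| ≤ blockNorm ν b k → x ∈ Finset.Icc (-K) K := by
      intro x hx
      have hxK : |x| ≤ K := by
        rw [hKdef]
        apply Int.le_floor.mpr
        calc ((|x| : ℤ) : ℝ) ≤ ((blockNorm ν b k : ℤ) : ℝ) := by exact_mod_cast hx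
          _ ≤ K₀ := hkle
      rw [Finset.mem_Icc]
      constructor <;> [linarith [neg_abs_le x]; linarith [le_abs_self x]]
    constructor
    · rw [Fintype.mem_piFinset]
      intro j
      apply hcomp
      calc |k.1 j| ≤ ∑ j', |k.1 j'| :=
            Finset.single_le_sum (fun j' _ => abs_nonneg (k.1 j')) (Finset.mem_univ j)
        _ ≤ blockNorm ν b k := le_max_left _ _
    · rw [Fintype.mem_piFinset]
      intro j
      apply hcomp
      calc |k.2 j| ≤ ∑ j', |k.2 j'| :=
            Finset.single_le_sum (fun j' _ => abs_nonneg (k.2 j')) (Finset.mem_univ j)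
        _ ≤ blockNorm ν b k := le_max_right _ _
  have hnmem : ∀ n : ℤ, |(n:ℝ)| ≤ 2*R*K₀ → n ∈ NF := by
    intro n hn
    rw [hNF, Finset.mem_Icc]
    have : |(n:ℝ)| ≤ (N:ℝ) := hn.trans hNreal
    rw [show |(n:ℝ)| = ((|n| : ℤ) : ℝ) by push_cast; ring] at this
    have h2 : |n| ≤ N := by exact_mod_cast this
    constructor <;> [linarith [neg_abs_le n]; linarith [le_abs_self n]]
  have hKF'pos : ∀ k ∈ KF', 0 < blockNorm ν b k := by
    intro k hk
    exact (Finset.mem_filter.mp hk).2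
  clear_value KF KF' NF SF
  -- the uniform radius
  set ε : ℝ := 3*R*γ*K₀ / K₀^τ with hεdef
  have hε0 : 0 ≤ ε := by
    apply div_nonneg _ hKτpos.le
    nlinarith
  -- the key counting estimate
  have key : ∀ A : ℝ → ℤ → ℝ,
      volume (⋃ k ∈ KF', ⋃ n ∈ NF, ⋃ s ∈ SF,
        {σ ∈ O | |pairKW ν b k (freqMap ν b i σ) + A s n| < ε})
      ≤ ENNReal.ofReal (c * γ) := by
    intro A
    have hsingle : ∀ k ∈ KF', ∀ (n : ℤ) (s : ℝ),
        volume {σ ∈ O | |pairKW ν b k (freqMap ν b i σ) + A s n| < ε}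
        ≤ ENNReal.ofReal ((2*(r+sB))^(d-1) * (2*((2+4*sB)*ε))) := by
      intro k hk n s
      have hkpos : 0 < blockNorm ν b k := hKF'pos k hk
      have := single_set_bound ν b i O hOc.measurableSet r sB hr hsB hOr hO2 hiB
        k hkpos (A s n) ε hε0
      rw [ENNReal.ofReal_mul (pow_nonneg (by linarith) _), ENNReal.ofReal_pow (by linarith)]
      exact this
    calc volume (⋃ k ∈ KF', ⋃ n ∈ NF, ⋃ s ∈ SF,
          {σ ∈ O | |pairKW ν b k (freqMap ν b i σ) + A s n| < ε})
        ≤ ∑ k ∈ KF', ∑ n ∈ NF, ∑ s ∈ SF,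
            volume {σ ∈ O | |pairKW ν b k (freqMap ν b i σ) + A s n| < ε} := by
          refine (measure_biUnion_finset_le _ _).trans (Finset.sum_le_sum fun k hk => ?_)
          refine (measure_biUnion_finset_le _ _).trans (Finset.sum_le_sum fun n hn => ?_)
          exact measure_biUnion_finset_le _ _
      _ ≤ ∑ k ∈ KF', ∑ n ∈ NF, ∑ s ∈ SF,
            ENNReal.ofReal ((2*(r+sB))^(d-1) * (2*((2+4*sB)*ε))) := by
          refine Finset.sum_le_sum fun k hk => Finset.sum_le_sum fun n _ =>
            Finset.sum_le_sum fun s _ => hsingle k hk n s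
      _ = (KF'.card : ℝ≥0∞) * ((NF.card : ℝ≥0∞) * ((SF.card : ℝ≥0∞) *
            ENNReal.ofReal ((2*(r+sB))^(d-1) * (2*((2+4*sB)*ε))) )) := by
          simp only [Finset.sum_const, nsmul_eq_mul]
      _ ≤ ENNReal.ofReal (c * γ) := by
          rw [hSFcard, ← ENNReal.ofReal_natCast KF'.card, ← ENNReal.ofReal_natCast NF.card,
            show ((2:ℕ) : ℝ≥0∞) = ENNReal.ofReal 2 by simp,
            ← ENNReal.ofReal_mul (by norm_num),
            ← ENNReal.ofReal_mul (Nat.cast_nonneg _),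
            ← ENNReal.ofReal_mul (Nat.cast_nonneg _)]
          apply ENNReal.ofReal_le_ofReal
          -- real arithmetic
          have hstep1 : ((KF'.card : ℕ) : ℝ) * (((NF.card : ℕ) : ℝ) *
              (2 * ((2*(r+sB))^(d-1) * (2*((2+4*sB)*ε)))))
              ≤ (3*K₀)^d * ((7*R*K₀) * (2 * ((2*R)^(d-1) * (2*((2+4*sB)*ε))))) := by
            have hfac : (0:ℝ) ≤ 2 * ((2*(r+sB))^(d-1) * (2*((2+4*sB)*ε))) := by
              have : (0:ℝ) ≤ (2*(r+sB))^(d-1) := pow_nonneg (by linarith) _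
              have h2 : (0:ℝ) ≤ 2*((2+4*sB)*ε) := by nlinarith
              positivity
            have h2R : (2*(r+sB)) = 2*R := by rw [hRdef]
            rw [h2R]
            have e1 : (0:ℝ) ≤ (3*K₀)^d := pow_nonneg (by linarith) _
            have e2 : (0:ℝ) ≤ 7*R*K₀ := by nlinarith
            have e3 : (0:ℝ) ≤ (2*R)^(d-1) := pow_nonneg (by linarith) _
            have e4 : (0:ℝ) ≤ 2*((2+4*sB)*ε) := by nlinarith
            have e5 : (0:ℝ) ≤ ((NF.card : ℕ) : ℝ) * (2 * ((2*R)^(d-1) * (2*((2+4*sB)*ε)))) :=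
              mul_nonneg (Nat.cast_nonneg _)
                (mul_nonneg (by norm_num) (mul_nonneg e3 e4))
            apply mul_le_mul hcardK _ e5 e1
            apply mul_le_mul hcardN le_rfl (by rw [h2R] at hfac; exact hfac) e2
          refine hstep1.trans ?_
          have hstep2 : (3*K₀)^d * ((7*R*K₀) * (2 * ((2*R)^(d-1) * (2*((2+4*sB)*ε)))))
              = (c * γ) * (K₀^d * K₀ * K₀ / K₀^τ) := by
            rw [hεdef, hcdef]
            field_simp
            ring
          rw [hstep2]
          have hKle : K₀^d * K₀ * K₀ ≤ K₀^τ := by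
            have h1 : K₀^d * K₀ * K₀ = K₀ ^ ((d:ℝ) + 1 + 1) := by
              rw [Real.rpow_add hK0pos, Real.rpow_add hK0pos, Real.rpow_one,
                Real.rpow_natCast]
            rw [h1]
            apply Real.rpow_le_rpow_of_exponent_le hK₀
            rw [hd]
            push_cast
            linarith
          have hdiv : K₀^d * K₀ * K₀ / K₀^τ ≤ 1 := (div_le_one hKτpos).mpr hKle
          calc (c * γ) * (K₀^d * K₀ * K₀ / K₀^τ) ≤ (c * γ) * 1 :=
                mul_le_mul_of_nonneg_left hdiv (by positivity)
            _ = c * γ := mul_one _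
  constructor
  · -- first estimate
    refine le_trans (measure_mono ?_) (key fun s n => s * |(n:ℝ)|)
    rintro σ ⟨hσO, k, n, s, hs, hkpos, hkle, hlt⟩
    have hsabs : |s| = 1 := by rcases hs with rfl | rfl <;> simp
    have hpb := hpair σ hσO k hkle
    have hnb : |(n:ℝ)| ≤ 2*R*K₀ := by
      have h1 : abs (s * |(n:ℝ)|) = |(n:ℝ)| := by rw [abs_mul, hsabs, one_mul, abs_abs]
      have h2 : abs (s * |(n:ℝ)|) - |pairKW ν b k (freqMap ν b i σ)|
          ≤ abs (pairKW ν b k (freqMap ν b i σ) + s * |(n:ℝ)|) := by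
        have h := abs_sub (pairKW ν b k (freqMap ν b i σ) + s * |(n:ℝ)|)
          (pairKW ν b k (freqMap ν b i σ))
        rw [add_sub_cancel_left] at h
        linarith
      have h3 : |(n:ℝ)| ≤ K₀ * R + 1 := by
        rw [← h1]
        have := hlt.le.trans hγK
        linarith
      have hRK : (1:ℝ) ≤ R*K₀ := by
        have := mul_le_mul hR1 hK₀ zero_le_one (by linarith : (0:ℝ) ≤ R)
        linarith
      linarith
    have hεle : γ / K₀ ^ τ ≤ ε := by
      rw [hεdef]
      refine div_le_div_of_nonneg_right' ?_ hKτpos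
      have hRK : (1:ℝ) ≤ R*K₀ := by
        have := mul_le_mul hR1 hK₀ zero_le_one (by linarith : (0:ℝ) ≤ R)
        linarith
      have := mul_le_mul_of_nonneg_left (by linarith : (1:ℝ) ≤ 3*(R*K₀)) hγ.le
      linarith
    have hsmem : s ∈ SF := by rw [hSF]; rcases hs with rfl | rfl <;> simp
    refine Set.mem_iUnion₂.mpr ⟨k, hkmem k hkpos hkle, ?_⟩
    refine Set.mem_iUnion₂.mpr ⟨n, hnmem n hnb, ?_⟩
    refine Set.mem_iUnion₂.mpr ⟨s, hsmem, ?_⟩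
    exact ⟨hσO, lt_of_lt_of_le hlt hεle⟩
  · -- second estimate
    refine le_trans (measure_mono ?_) (key fun s n => 2 * s * |(n:ℝ)|)
    rintro σ ⟨hσO, k, n, s, hs, hkpos, hkle, hlt⟩
    have hsabs : |s| = 1 := by rcases hs with rfl | rfl <;> simp
    have hpb := hpair σ hσO k hkle
    have hnb : |(n:ℝ)| ≤ R*K₀ := by
      have h1 : abs (2 * s * |(n:ℝ)|) = 2 * |(n:ℝ)| := by
        rcases hs with rfl | rfl <;> norm_num [abs_mul, abs_abs]
      have h2 : abs (2 * s * |(n:ℝ)|) - |pairKW ν b k (freqMap ν b i σ)|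
          ≤ abs (pairKW ν b k (freqMap ν b i σ) + 2 * s * |(n:ℝ)|) := by
        have h := abs_sub (pairKW ν b k (freqMap ν b i σ) + 2 * s * |(n:ℝ)|)
          (pairKW ν b k (freqMap ν b i σ))
        rw [add_sub_cancel_left] at h
        linarith
      have h4 : γ * |(n:ℝ)| / K₀ ^ τ ≤ |(n:ℝ)| := by
        rw [div_le_iff₀ hKτpos]
        have e1 : γ * |(n:ℝ)| ≤ 1 * |(n:ℝ)| :=
          mul_le_mul_of_nonneg_right (by linarith) (abs_nonneg _)
        have e2 : |(n:ℝ)| * 1 ≤ |(n:ℝ)| * K₀ ^ τ :=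
          mul_le_mul_of_nonneg_left hKτ1 (abs_nonneg _)
        linarith
      linarith
    have hεle : γ * |(n:ℝ)| / K₀ ^ τ ≤ ε := by
      rw [hεdef]
      refine div_le_div_of_nonneg_right' ?_ hKτpos
      have e1 : γ * |(n:ℝ)| ≤ γ * (R*K₀) := mul_le_mul_of_nonneg_left hnb hγ.le
      have h0 : (0:ℝ) ≤ γ*R*K₀ :=
        mul_nonneg (mul_nonneg hγ.le (by linarith : (0:ℝ) ≤ R)) hK0pos.le
      have e2 : γ * (R*K₀) ≤ 3*R*γ*K₀ := by linarith
      linarith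
    have hsmem : s ∈ SF := by rw [hSF]; rcases hs with rfl | rfl <;> simp
    refine Set.mem_iUnion₂.mpr ⟨k, hkmem k hkpos hkle, ?_⟩
    refine Set.mem_iUnion₂.mpr ⟨n, hnmem n (by
      have hRK0 : (0:ℝ) ≤ R*K₀ := by positivity
      linarith), ?_⟩
    refine Set.mem_iUnion₂.mpr ⟨s, hsmem, ?_⟩
    exact ⟨hσO, lt_of_lt_of_le hlt hεle⟩
end

section
/- Let d ≥ 1, r > 0, 0 < ϱ ≤ 1 with 2ϱ < r, K ≥ 0 and M > 0. If c : ℤ^d → ℂ satisfies |c_k| ≤ M e^{−|k| r} for all k ∈ ℤ^d, then the truncation tail satisfies Σ_{k : |k| > K} |c_k| e^{|k|(r−2ϱ)} ≤ ((2+2e)/ϱ)^d · e^{−Kϱ} · M. -/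
/-!
On the tail `|k| > K` the weight `e^{|k|(r - 2ϱ)}` turns the decay `e^{-|k| r}` of the
coefficients into `e^{-2ϱ|k|} ≤ e^{-Kϱ} e^{-ϱ|k|}`. Since `e^{-ϱ|k|} = ∏ⱼ e^{-ϱ|kⱼ|}`, the
majorant sums over `ℤ^d` to the `d`-th power of the two-sided geometric series
`∑ₙ e^{-ϱ|n|} = (e^ϱ + 1)/(e^ϱ - 1)`, which is at most `(e + 1)/ϱ` for `ϱ ≤ 1` because
`e^ϱ - 1 ≥ ϱ`.
-/

/-- The ℓ¹ norm of a multi-index `k : Fin d → ℤ`, as a real number. -/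
noncomputable def l1norm {d : ℕ} (k : Fin d → ℤ) : ℝ := ∑ j, |(k j : ℝ)|

open Real

theorem hasSum_prod_pi_fin {α : Type*} {g : α → ℝ} {a : ℝ} (hg : HasSum g a) (hg0 : 0 ≤ g)
    (d : ℕ) : HasSum (fun k : Fin d → α => ∏ j, g (k j)) (a ^ d) := by
  induction d with
  | zero => simp
  | succ d ih =>
    have hprod : Summable fun p : α × (Fin d → α) => g p.1 * ∏ j, g (p.2 j) :=
      hg.summable.mul_of_nonneg (g := fun k : Fin d → α => ∏ j, g (k j)) ih.summable hg0
        fun k => Finset.prod_nonneg fun j _ => hg0 _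
    rw [← (Fin.consEquiv fun _ => α).hasSum_iff, pow_succ']
    refine (hg.mul ih hprod).congr_fun fun p => ?_
    simp only [Function.comp_apply, Fin.consEquiv_apply, Fin.prod_univ_succ, Fin.cons_zero,
      Fin.cons_succ]

theorem hasSum_pow_natAbs {x : ℝ} (hx0 : 0 ≤ x) (hx1 : x < 1) :
    HasSum (fun n : ℤ => x ^ n.natAbs) ((1 + x) / (1 - x)) := by
  have hgeom := hasSum_geometric_of_lt_one hx0 hx1
  have hneg : ∀ n : ℕ, (-(n + 1 : ℤ)).natAbs = n + 1 := fun n => by omega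
  convert HasSum.of_nat_of_neg_add_one (f := fun n : ℤ => x ^ n.natAbs) (by simpa using hgeom)
    (by simpa only [hneg, pow_succ'] using hgeom.mul_left x) using 1
  field_simp [(sub_pos.2 hx1).ne']

theorem hasSum_exp_neg_mul_abs {ϱ : ℝ} (hϱ : 0 < ϱ) :
    HasSum (fun n : ℤ => exp (-(ϱ * |(n : ℝ)|))) ((exp ϱ + 1) / (exp ϱ - 1)) := by
  convert hasSum_pow_natAbs (exp_pos (-ϱ)).le (exp_lt_one_iff.2 (neg_neg_of_pos hϱ)) using 1
  · ext n
    rw [← exp_nat_mul, Nat.cast_natAbs, Int.cast_abs]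
    ring_nf
  · have : exp ϱ - 1 ≠ 0 := by linarith [add_one_lt_exp hϱ.ne']
    rw [exp_neg]
    field_simp

theorem hasSum_exp_neg_mul_l1norm {ϱ : ℝ} (hϱ : 0 < ϱ) (d : ℕ) :
    HasSum (fun k : Fin d → ℤ => exp (-(ϱ * l1norm k))) (((exp ϱ + 1) / (exp ϱ - 1)) ^ d) := by
  convert hasSum_prod_pi_fin (hasSum_exp_neg_mul_abs hϱ) (fun n => (exp_pos _).le) d using 2 with k
  rw [l1norm, Finset.mul_sum, ← Finset.sum_neg_distrib, exp_sum]

theorem exp_add_one_div_exp_sub_one_le {ϱ : ℝ} (hϱ0 : 0 < ϱ) (hϱ1 : ϱ ≤ 1) :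
    (exp ϱ + 1) / (exp ϱ - 1) ≤ (exp 1 + 1) / ϱ := by
  have hϱ : ϱ ≤ exp ϱ - 1 := by linarith [add_one_le_exp ϱ]
  calc (exp ϱ + 1) / (exp ϱ - 1) ≤ (exp ϱ + 1) / ϱ := by gcongr
    _ ≤ (exp 1 + 1) / ϱ := by gcongr

theorem mul_exp_le_of_le_mul_exp_neg {a M r ϱ K t : ℝ} (hM : 0 ≤ M) (hϱ : 0 ≤ ϱ) (hKt : K < t)
    (ha : a ≤ M * exp (-(t * r))) :
    a * exp (t * (r - 2 * ϱ)) ≤ M * exp (-(K * ϱ)) * exp (-(ϱ * t)) := by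
  have hdecay : exp (-(ϱ * t)) ≤ exp (-(K * ϱ)) := exp_le_exp.2 (by nlinarith)
  calc a * exp (t * (r - 2 * ϱ)) ≤ M * exp (-(t * r)) * exp (t * (r - 2 * ϱ)) := by gcongr
    _ = M * exp (-(ϱ * t)) * exp (-(ϱ * t)) := by
      rw [mul_assoc, ← exp_add, mul_assoc, ← exp_add]
      ring_nf
    _ ≤ M * exp (-(K * ϱ)) * exp (-(ϱ * t)) := by gcongr

theorem fourier_truncation_estimate_general (d : ℕ) (r ϱ K M : ℝ)
    (hϱ0 : 0 < ϱ) (hϱ1 : ϱ ≤ 1) (hM : 0 < M)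
    (c : (Fin d → ℤ) → ℂ)
    (hc : ∀ k : Fin d → ℤ, ‖c k‖ ≤ M * Real.exp (-(l1norm k * r))) :
    Summable (fun k : {k : Fin d → ℤ // K < l1norm k} =>
      ‖c k.1‖ * Real.exp (l1norm k.1 * (r - 2 * ϱ))) ∧
    (∑' k : {k : Fin d → ℤ // K < l1norm k},
      ‖c k.1‖ * Real.exp (l1norm k.1 * (r - 2 * ϱ)))
      ≤ ((2 + 2 * Real.exp 1) / ϱ) ^ d * Real.exp (-(K * ϱ)) * M := by
  have hmaj := (hasSum_exp_neg_mul_l1norm hϱ0 d).mul_left (M * exp (-(K * ϱ)))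
  have hmaj0 : ∀ k : Fin d → ℤ, 0 ≤ M * exp (-(K * ϱ)) * exp (-(ϱ * l1norm k)) :=
    fun k => by positivity
  have hbound : ∀ k : {k : Fin d → ℤ // K < l1norm k}, ‖c k.1‖ * exp (l1norm k.1 * (r - 2 * ϱ))
      ≤ M * exp (-(K * ϱ)) * exp (-(ϱ * l1norm k.1)) := fun k =>
    mul_exp_le_of_le_mul_exp_neg hM.le hϱ0.le k.2 (hc k)
  have hsummable := Summable.of_nonneg_of_le (fun k => by positivity) hbound
    (hmaj.summable.subtype _)
  refine ⟨hsummable, ?_⟩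
  calc _ ≤ ∑' k : {k : Fin d → ℤ // K < l1norm k},
          M * exp (-(K * ϱ)) * exp (-(ϱ * l1norm k.1)) :=
        hsummable.tsum_le_tsum hbound (hmaj.summable.subtype _)
    _ ≤ M * exp (-(K * ϱ)) * ((exp ϱ + 1) / (exp ϱ - 1)) ^ d :=
        hmaj.tsum_eq ▸ hmaj.summable.tsum_subtype_le _ {k | K < l1norm k} hmaj0
    _ ≤ M * exp (-(K * ϱ)) * ((2 + 2 * exp 1) / ϱ) ^ d := by
        have hbase : 0 ≤ (exp ϱ + 1) / (exp ϱ - 1) :=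
          (hasSum_exp_neg_mul_abs hϱ0).nonneg fun n => (exp_pos _).le
        gcongr M * exp (-(K * ϱ)) * ?_ ^ d
        calc _ ≤ (exp 1 + 1) / ϱ := exp_add_one_div_exp_sub_one_le hϱ0 hϱ1
          _ ≤ (2 + 2 * exp 1) / ϱ := by gcongr ?_ / ϱ; linarith [exp_pos 1]
    _ = ((2 + 2 * exp 1) / ϱ) ^ d * exp (-(K * ϱ)) * M := by ring

/-- Fourier truncation estimate: if `|c_k| ≤ M e^{−|k|r}` then the tail
over `|k| > K`, weighted by `e^{|k|(r−2ϱ)}`, is at most `((2+2e)/ϱ)^d e^{−Kϱ} M`. -/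
theorem fourier_truncation_estimate (d : ℕ) (hd : 1 ≤ d) (r ϱ K M : ℝ)
    (hr : 0 < r) (hϱ0 : 0 < ϱ) (hϱ1 : ϱ ≤ 1) (h2ϱ : 2 * ϱ < r)
    (hK : 0 ≤ K) (hM : 0 < M)
    (c : (Fin d → ℤ) → ℂ)
    (hc : ∀ k : Fin d → ℤ, ‖c k‖ ≤ M * Real.exp (-(l1norm k * r))) :
    Summable (fun k : {k : Fin d → ℤ // K < l1norm k} =>
      ‖c k.1‖ * Real.exp (l1norm k.1 * (r - 2 * ϱ))) ∧
    (∑' k : {k : Fin d → ℤ // K < l1norm k},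
      ‖c k.1‖ * Real.exp (l1norm k.1 * (r - 2 * ϱ)))
      ≤ ((2 + 2 * Real.exp 1) / ϱ) ^ d * Real.exp (-(K * ϱ)) * M :=
  fourier_truncation_estimate_general d r ϱ K M hϱ0 hϱ1 hM c hc
end

section
/- Let d ≥ 1, τ > 0, γ > 0, r > 0, 0 < ϱ ≤ 1 and K ≥ 1. Let ω ∈ ℝ^d satisfy |⟨k,ω⟩| ≥ γ/|k|^τ for every k ∈ ℤ^d with 0 < |k| ≤ K. Given complex coefficients (P_k)_{0<|k|≤K}, set P(θ) = Σ_{0<|k|≤K} P_k e^{i⟨k,θ⟩} and F(θ) = Σ_{0<|k|≤K} (i P_k/⟨k,ω⟩) e^{i⟨k,θ⟩}. Then F is the unique trigonometric polynomial with modes 0 < |k| ≤ K and zero mean solving the homological equation ∂_ω F + P = 0, where ∂_ω F = Σ_{j=1}^d ω_j ∂_{θ_j} F, and its coefficients satisfy Σ_{0<|k|≤K} |F_k| e^{|k|(r−ϱ)} ≤ γ^{−1} (τ/(eϱ))^τ Σ_{0<|k|≤K} |P_k| e^{|k| r}. -/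
/-!
The characters `θ ↦ e^{i⟨k,θ⟩}` of `ℝ^d` are pairwise distinct, hence linearly independent
(Dedekind), so for trigonometric polynomials the equation `∂_ω F + P = 0` holds iff
`i⟨k,ω⟩ F_k + P_k = 0` for every mode `k`. The Diophantine condition makes every divisor
`⟨k,ω⟩` with `0 < |k| ≤ K` nonzero, which gives existence and uniqueness. The estimate is
termwise: `|F_k| ≤ γ⁻¹ |k|^τ |P_k|`, and `x^τ e^{-ϱx} ≤ (τ/(eϱ))^τ` for `x ≥ 0`.
-/

open scoped Classical

/-- The trigonometric sum `θ ↦ Σ_k c_k e^{i⟨k,θ⟩}` of a coefficient family. -/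
noncomputable def trigSum {d : ℕ} (c : (Fin d → ℤ) → ℂ) (θ : Fin d → ℝ) : ℂ :=
  ∑' k : Fin d → ℤ, c k * Complex.exp (Complex.I * ∑ j, (k j : ℂ) * (θ j : ℂ))

/-- The coefficients `F_k = i P_k / ⟨k,ω⟩` (for `0 < |k| ≤ K`) of the solution of the
homological equation `∂_ω F + P = 0`. -/
noncomputable def homSolZero {d : ℕ} (K : ℝ) (ω : Fin d → ℝ)
    (P : (Fin d → ℤ) → ℂ) (k : Fin d → ℤ) : ℂ :=
  if 0 < (∑ j, |k j|) ∧ ((∑ j, |k j| : ℤ) : ℝ) ≤ K then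
    Complex.I * P k / (((∑ j, (k j : ℝ) * ω j : ℝ)) : ℂ)
  else 0

theorem AddChar.linearIndependent_coe (A R : Type*) [AddMonoid A] [CommRing R] [IsDomain R] :
    LinearIndependent R ((⇑) : AddChar A R → A → R) :=
  (linearIndependent_monoidHom (Multiplicative A) R).comp _ AddChar.toMonoidHomEquiv.injective

theorem Real.rpow_mul_exp_neg_mul_le {τ ϱ x : ℝ} (hτ : 0 < τ) (hϱ : 0 < ϱ) (hx : 0 ≤ x) :
    x ^ τ * Real.exp (-(ϱ * x)) ≤ (τ / (Real.exp 1 * ϱ)) ^ τ := by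
  set y := ϱ * x / τ
  have hsplit : x ^ τ * Real.exp (-(ϱ * x)) = (τ / ϱ * (y * Real.exp (-y))) ^ τ := by
    have hx' : τ / ϱ * y = x := by simp only [y]; field_simp
    rw [← mul_assoc, hx', Real.mul_rpow hx (Real.exp_nonneg _), ← Real.exp_mul]
    congr 2
    simp only [y]; field_simp
  have hbase : τ / ϱ * (y * Real.exp (-y)) ≤ τ / (Real.exp 1 * ϱ) := by
    calc τ / ϱ * (y * Real.exp (-y)) ≤ τ / ϱ * Real.exp (-1) :=
          mul_le_mul_of_nonneg_left (Real.mul_exp_neg_le_exp_neg_one y) (by positivity)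
      _ = τ / (Real.exp 1 * ϱ) := by rw [Real.exp_neg]; field_simp
  rw [hsplit]
  exact Real.rpow_le_rpow (by positivity) hbase hτ.le

namespace HomologicalEquation

variable {d : ℕ}

noncomputable def pairing (k : Fin d → ℤ) : (Fin d → ℝ) →L[ℝ] ℂ :=
  Complex.ofRealCLM.comp (∑ j, (k j : ℝ) • ContinuousLinearMap.proj j)

theorem pairing_apply (k : Fin d → ℤ) (θ : Fin d → ℝ) :
    pairing k θ = ((∑ j, (k j : ℝ) * θ j : ℝ) : ℂ) := by
  simp [pairing]

noncomputable def expChar (k : Fin d → ℤ) : AddChar (Fin d → ℝ) ℂ where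
  toFun θ := Complex.exp (Complex.I * pairing k θ)
  map_zero_eq_one' := by simp
  map_add_eq_mul' θ η := by simp [mul_add, Complex.exp_add]

theorem expChar_apply (k : Fin d → ℤ) (θ : Fin d → ℝ) :
    expChar k θ = Complex.exp (Complex.I * pairing k θ) := rfl

theorem expChar_injective : Function.Injective (expChar (d := d)) := by
  intro k k' h
  funext j
  have hj := DFunLike.congr_fun h (Pi.single j 1)
  simp only [expChar_apply, pairing_apply, Pi.single_apply, mul_ite, mul_one, mul_zero,
    Finset.sum_ite_eq', Finset.mem_univ, if_true] at hj
  obtain ⟨n, hn⟩ := Complex.exp_eq_exp_iff_exists_int.1 hj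
  -- `k j - k' j = 2πn` with `π` irrational forces `n = 0`
  have hreal : (k j : ℝ) = k' j + n * (2 * Real.pi) := by
    have := congrArg Complex.im hn
    simpa [mul_comm, mul_left_comm, mul_assoc] using this
  have hn0 : n = 0 := by
    by_contra hn0
    refine irrational_pi ⟨((k j - k' j : ℤ) : ℚ) / (2 * n), ?_⟩
    push_cast
    field_simp
    linarith
  simpa [hn0] using hreal

theorem linearIndependent_expChar :
    LinearIndependent ℂ (fun k : Fin d → ℤ => ⇑(expChar k)) :=
  (AddChar.linearIndependent_coe _ ℂ).comp _ expChar_injective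

theorem trigSum_eq_sum {s : Finset (Fin d → ℤ)} {c : (Fin d → ℤ) → ℂ}
    (hc : ∀ k ∉ s, c k = 0) : trigSum c = fun θ => ∑ k ∈ s, c k * expChar k θ := by
  funext θ
  rw [trigSum, tsum_eq_sum fun k hk => by rw [hc k hk, zero_mul]]
  refine Finset.sum_congr rfl fun k _ => ?_
  rw [expChar_apply, pairing_apply]
  push_cast
  rfl

theorem hasFDerivAt_expChar (k : Fin d → ℤ) (θ : Fin d → ℝ) :
    HasFDerivAt (⇑(expChar k)) (expChar k θ • Complex.I • pairing k) θ :=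
  ((Complex.I • pairing k).hasFDerivAt (x := θ)).cexp

theorem fderiv_trigSum_apply {s : Finset (Fin d → ℤ)} {c : (Fin d → ℤ) → ℂ}
    (hc : ∀ k ∉ s, c k = 0) (θ v : Fin d → ℝ) :
    fderiv ℝ (trigSum c) θ v = ∑ k ∈ s, c k * (Complex.I * pairing k v) * expChar k θ := by
  rw [trigSum_eq_sum hc,
    (HasFDerivAt.fun_sum fun k _ => (hasFDerivAt_expChar k θ).const_mul (c k)).fderiv]
  simp only [FunLike.coe_sum, Finset.sum_apply, FunLike.coe_smul, Pi.smul_apply, smul_eq_mul]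
  exact Finset.sum_congr rfl fun k _ => by ring

theorem fderiv_trigSum_add_trigSum_eq_zero_iff {s : Finset (Fin d → ℤ)}
    {G P : (Fin d → ℤ) → ℂ} (hG : ∀ k ∉ s, G k = 0) (hP : ∀ k ∉ s, P k = 0) (ω : Fin d → ℝ) :
    (∀ θ, fderiv ℝ (trigSum G) θ ω + trigSum P θ = 0) ↔
      ∀ k ∈ s, G k * (Complex.I * pairing k ω) + P k = 0 := by
  have hsum : ∀ θ, fderiv ℝ (trigSum G) θ ω + trigSum P θ =
      (∑ k ∈ s, (G k * (Complex.I * pairing k ω) + P k) • ⇑(expChar k)) θ := fun θ => by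
    rw [fderiv_trigSum_apply hG, trigSum_eq_sum hP, Finset.sum_apply, ← Finset.sum_add_distrib]
    exact Finset.sum_congr rfl fun k _ => by simp only [Pi.smul_apply, smul_eq_mul]; ring
  simp only [hsum]
  constructor
  · exact fun h => linearIndependent_iff'.1 linearIndependent_expChar s _ (funext h)
  · intro h θ
    rw [Finset.sum_eq_zero fun k hk => by rw [h k hk, zero_smul]]
    rfl

theorem mul_I_mul_add_eq_zero_iff {g p : ℂ} {a : ℝ} (ha : a ≠ 0) :
    g * (Complex.I * a) + p = 0 ↔ g = Complex.I * p / a := by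
  have ha' : (a : ℂ) ≠ 0 := Complex.ofReal_ne_zero.2 ha
  rw [eq_div_iff ha']
  constructor
  · intro h
    linear_combination (-Complex.I) * h + g * a * Complex.I_sq
  · intro h
    linear_combination Complex.I * h + p * Complex.I_sq

theorem norm_I_mul_div_mul_exp_le {τ γ ϱ r n a : ℝ} (p : ℂ) (hτ : 0 < τ) (hγ : 0 < γ)
    (hϱ : 0 < ϱ) (hn : 0 < n) (ha : γ / n ^ τ ≤ |a|) :
    ‖Complex.I * p / a‖ * Real.exp (n * (r - ϱ))
      ≤ γ⁻¹ * (τ / (Real.exp 1 * ϱ)) ^ τ * (‖p‖ * Real.exp (n * r)) := by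
  have hinv : |a|⁻¹ ≤ n ^ τ / γ := by
    simpa only [inv_div] using inv_anti₀ (by positivity) ha
  calc ‖Complex.I * p / a‖ * Real.exp (n * (r - ϱ))
      = ‖p‖ * |a|⁻¹ * Real.exp (n * (r - ϱ)) := by
        rw [norm_div, norm_mul, Complex.norm_I, one_mul, Complex.norm_real, Real.norm_eq_abs,
          div_eq_mul_inv]
    _ ≤ ‖p‖ * (n ^ τ / γ) * Real.exp (n * (r - ϱ)) := by gcongr
    _ = γ⁻¹ * (n ^ τ * Real.exp (-(ϱ * n))) * (‖p‖ * Real.exp (n * r)) := by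
        rw [show n * (r - ϱ) = n * r + -(ϱ * n) by ring, Real.exp_add]
        ring
    _ ≤ γ⁻¹ * (τ / (Real.exp 1 * ϱ)) ^ τ * (‖p‖ * Real.exp (n * r)) := by
        gcongr
        exact Real.rpow_mul_exp_neg_mul_le hτ hϱ hn.le

noncomputable def modeSet (d : ℕ) (K : ℝ) : Finset (Fin d → ℤ) :=
  (Fintype.piFinset fun _ : Fin d => Finset.Icc (-⌈K⌉) ⌈K⌉).filter
    fun k => 0 < (∑ j, |k j|) ∧ ((∑ j, |k j| : ℤ) : ℝ) ≤ K

theorem mem_modeSet {K : ℝ} {k : Fin d → ℤ} :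
    k ∈ modeSet d K ↔ 0 < (∑ j, |k j|) ∧ ((∑ j, |k j| : ℤ) : ℝ) ≤ K := by
  refine ⟨fun h => (Finset.mem_filter.1 h).2, fun h => Finset.mem_filter.2
    ⟨Fintype.mem_piFinset.2 fun j => Finset.mem_Icc.2 (abs_le.1 ?_), h⟩⟩
  calc |k j| ≤ ∑ i, |k i| := Finset.single_le_sum (fun i _ => abs_nonneg (k i)) (Finset.mem_univ j)
    _ ≤ ⌈K⌉ := by exact_mod_cast h.2.trans (Int.le_ceil K)

theorem homSolZero_of_mem_modeSet {K : ℝ} {ω : Fin d → ℝ} {P : (Fin d → ℤ) → ℂ}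
    {k : Fin d → ℤ} (hk : k ∈ modeSet d K) :
    homSolZero K ω P k = Complex.I * P k / ((∑ j, (k j : ℝ) * ω j : ℝ) : ℂ) :=
  if_pos (mem_modeSet.1 hk)

theorem homSolZero_of_notMem_modeSet {K : ℝ} {ω : Fin d → ℝ} {P : (Fin d → ℤ) → ℂ}
    {k : Fin d → ℤ} (hk : k ∉ modeSet d K) : homSolZero K ω P k = 0 :=
  if_neg (mt mem_modeSet.2 hk)

theorem eq_homSolZero_iff {K : ℝ} {ω : Fin d → ℝ} {P G : (Fin d → ℤ) → ℂ}
    (hG : ∀ k ∉ modeSet d K, G k = 0) :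
    G = homSolZero K ω P ↔
      ∀ k ∈ modeSet d K, G k = Complex.I * P k / ((∑ j, (k j : ℝ) * ω j : ℝ) : ℂ) := by
  refine ⟨fun h k hk => h ▸ homSolZero_of_mem_modeSet hk, fun h => funext fun k => ?_⟩
  by_cases hk : k ∈ modeSet d K
  · rw [h k hk, homSolZero_of_mem_modeSet hk]
  · rw [hG k hk, homSolZero_of_notMem_modeSet hk]

end HomologicalEquation

open HomologicalEquation

theorem homological_equation_zero_order_general (d : ℕ)
    (τ γ r ϱ K : ℝ) (hτ : 0 < τ) (hγ : 0 < γ)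
    (hϱ0 : 0 < ϱ)
    (ω : Fin d → ℝ)
    (hdio : ∀ k : Fin d → ℤ, 0 < (∑ j, |k j|) → ((∑ j, |k j| : ℤ) : ℝ) ≤ K →
      γ / ((∑ j, |k j| : ℤ) : ℝ) ^ τ ≤ |∑ j, (k j : ℝ) * ω j|)
    (P : (Fin d → ℤ) → ℂ)
    (hPsupp : ∀ k : Fin d → ℤ,
      ¬(0 < (∑ j, |k j|) ∧ ((∑ j, |k j| : ℤ) : ℝ) ≤ K) → P k = 0) :
    (∀ θ : Fin d → ℝ,
      fderiv ℝ (trigSum (homSolZero K ω P)) θ ω + trigSum P θ = 0) ∧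
    (∀ G : (Fin d → ℤ) → ℂ,
      (∀ k : Fin d → ℤ,
        ¬(0 < (∑ j, |k j|) ∧ ((∑ j, |k j| : ℤ) : ℝ) ≤ K) → G k = 0) →
      (∀ θ : Fin d → ℝ, fderiv ℝ (trigSum G) θ ω + trigSum P θ = 0) →
      G = homSolZero K ω P) ∧
    Summable (fun k : Fin d → ℤ =>
      ‖homSolZero K ω P k‖ *
        Real.exp (((∑ j, |k j| : ℤ) : ℝ) * (r - ϱ))) ∧
    (∑' k : Fin d → ℤ,
      ‖homSolZero K ω P k‖ *
        Real.exp (((∑ j, |k j| : ℤ) : ℝ) * (r - ϱ)))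
      ≤ γ⁻¹ * (τ / (Real.exp 1 * ϱ)) ^ τ *
        ∑' k : Fin d → ℤ, ‖P k‖ * Real.exp (((∑ j, |k j| : ℤ) : ℝ) * r) := by
  have hP : ∀ k ∉ modeSet d K, P k = 0 := fun k hk => hPsupp k (mt mem_modeSet.2 hk)
  have hF : ∀ k ∉ modeSet d K, homSolZero K ω P k = 0 := fun _ => homSolZero_of_notMem_modeSet
  have hdivisor : ∀ k ∈ modeSet d K, (∑ j, (k j : ℝ) * ω j) ≠ 0 := fun k hk => by
    obtain ⟨hpos, hle⟩ := mem_modeSet.1 hk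
    have hγn := div_pos hγ (Real.rpow_pos_of_pos (Int.cast_pos (R := ℝ).2 hpos) τ)
    exact abs_pos.1 (hγn.trans_le (hdio k hpos hle))
  have hsolves : ∀ G, (∀ k ∉ modeSet d K, G k = 0) →
      ((∀ θ, fderiv ℝ (trigSum G) θ ω + trigSum P θ = 0) ↔ G = homSolZero K ω P) := by
    intro G hG
    rw [fderiv_trigSum_add_trigSum_eq_zero_iff hG hP, eq_homSolZero_iff hG]
    exact forall₂_congr fun k hk => by
      rw [pairing_apply]; exact mul_I_mul_add_eq_zero_iff (hdivisor k hk)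
  refine ⟨(hsolves _ hF).2 rfl, fun G hG => (hsolves G fun k hk => hG k (mt mem_modeSet.2 hk)).1,
    summable_of_ne_finset_zero fun k hk => by rw [hF k hk, norm_zero, zero_mul], ?_⟩
  rw [tsum_eq_sum fun k hk => by rw [hF k hk, norm_zero, zero_mul],
    tsum_eq_sum (s := modeSet d K) fun k hk => by rw [hP k hk, norm_zero, zero_mul],
    Finset.mul_sum]
  refine Finset.sum_le_sum fun k hk => ?_
  obtain ⟨hpos, hle⟩ := mem_modeSet.1 hk
  rw [homSolZero_of_mem_modeSet hk]
  exact norm_I_mul_div_mul_exp_le _ hτ hγ hϱ0 (Int.cast_pos.2 hpos) (hdio k hpos hle)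

/-- the zero-order (Diophantine) homological equation `∂_ω F + P = 0`:
`F_k = iP_k/⟨k,ω⟩` gives the unique zero-mean trigonometric polynomial solution with
modes `0 < |k| ≤ K`, with the small-divisor estimate
`Σ |F_k| e^{|k|(r−ϱ)} ≤ γ⁻¹ (τ/(eϱ))^τ Σ |P_k| e^{|k|r}`. -/
theorem homological_equation_zero_order (d : ℕ) (hd : 1 ≤ d)
    (τ γ r ϱ K : ℝ) (hτ : 0 < τ) (hγ : 0 < γ) (hr : 0 < r)
    (hϱ0 : 0 < ϱ) (hϱ1 : ϱ ≤ 1) (hK : 1 ≤ K)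
    (ω : Fin d → ℝ)
    (hdio : ∀ k : Fin d → ℤ, 0 < (∑ j, |k j|) → ((∑ j, |k j| : ℤ) : ℝ) ≤ K →
      γ / ((∑ j, |k j| : ℤ) : ℝ) ^ τ ≤ |∑ j, (k j : ℝ) * ω j|)
    (P : (Fin d → ℤ) → ℂ)
    (hPsupp : ∀ k : Fin d → ℤ,
      ¬(0 < (∑ j, |k j|) ∧ ((∑ j, |k j| : ℤ) : ℝ) ≤ K) → P k = 0) :
    (∀ θ : Fin d → ℝ,
      fderiv ℝ (trigSum (homSolZero K ω P)) θ ω + trigSum P θ = 0) ∧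
    (∀ G : (Fin d → ℤ) → ℂ,
      (∀ k : Fin d → ℤ,
        ¬(0 < (∑ j, |k j|) ∧ ((∑ j, |k j| : ℤ) : ℝ) ≤ K) → G k = 0) →
      (∀ θ : Fin d → ℝ, fderiv ℝ (trigSum G) θ ω + trigSum P θ = 0) →
      G = homSolZero K ω P) ∧
    Summable (fun k : Fin d → ℤ =>
      ‖homSolZero K ω P k‖ *
        Real.exp (((∑ j, |k j| : ℤ) : ℝ) * (r - ϱ))) ∧
    (∑' k : Fin d → ℤ,
      ‖homSolZero K ω P k‖ *
        Real.exp (((∑ j, |k j| : ℤ) : ℝ) * (r - ϱ)))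
      ≤ γ⁻¹ * (τ / (Real.exp 1 * ϱ)) ^ τ *
        ∑' k : Fin d → ℤ, ‖P k‖ * Real.exp (((∑ j, |k j| : ℤ) : ℝ) * r) :=
  homological_equation_zero_order_general d τ γ r ϱ K hτ hγ hϱ0 ω hdio P hPsupp
end

section
/- Let d ≥ 1, K ∈ ℕ, r̃ > 0, N > 0 and 0 < δ₀ ≤ 1/8. Let ω ∈ ℝ^d and Ω̄ ∈ ℝ satisfy |⟨k,ω⟩ − 2Ω̄| ≥ N/2 for every k ∈ ℤ^d with |k| ≤ K. Let (Ω̃_j)_{j∈ℤ^d} be complex numbers with Ω̃_0 = 0 and Σ_{j∈ℤ^d} |Ω̃_j| e^{|j| r̃} ≤ N δ₀. Then for every family of complex numbers (P_k)_{|k|≤K}, the linear system (⟨k,ω⟩ − 2Ω̄) F_k − 2 Σ_{|l|≤K} Ω̃_{k−l} F_l = i P_k (for all |k| ≤ K) has a unique solution (F_k)_{|k|≤K}, and it satisfies Σ_{|k|≤K} |F_k| e^{|k| r̃} ≤ (4/N) Σ_{|k|≤K} |P_k| e^{|k| r̃}. -/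
/-! With the weight `w k = e^{|k| r̃}`, which is submultiplicative, convolution with `Ω̃` has norm
at most `Σ_j |Ω̃_j| w j ≤ N δ₀ ≤ N/8` on `ℓ¹(w)`, while the diagonal divisors have size at least
`N/2`. So any solution of the truncated system obeys `(N/2 − 2 · N/8) ‖F‖ ≤ ‖P‖` in `ℓ¹(w)`. This
a priori estimate gives uniqueness, and existence follows because on functions supported in the
ball `|k| ≤ K` the system is an injective endomorphism of a finite-dimensional space. -/

section TruncatedSystem

variable {G : Type*} [AddGroup G] (S : Finset G) (D Ω : G → ℂ)

def truncSystem : (G → ℂ) →ₗ[ℂ] (G → ℂ) where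
  toFun F k := D k * F k - 2 * ∑ l ∈ S, Ω (k - l) * F l
  map_add' F F' := by
    ext k
    simp only [Pi.add_apply, mul_add, Finset.sum_add_distrib]
    ring
  map_smul' a F := by
    ext k
    simp only [Pi.smul_apply, smul_eq_mul, RingHom.id_apply, mul_left_comm _ a, ← Finset.mul_sum]
    ring

theorem truncSystem_apply (F : G → ℂ) (k : G) :
    truncSystem S D Ω F k = D k * F k - 2 * ∑ l ∈ S, Ω (k - l) * F l := rfl

theorem truncSystem_apply_eq_tsum {F : G → ℂ} (hF : ∀ l ∉ S, F l = 0) (k : G) :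
    truncSystem S D Ω F k = D k * F k - 2 * ∑' l, Ω (k - l) * F l := by
  rw [truncSystem_apply, tsum_eq_sum fun l hl => by rw [hF l hl, mul_zero]]

theorem norm_mul_le_norm_truncSystem_add (F : G → ℂ) (k : G) :
    ‖D k‖ * ‖F k‖ ≤ ‖truncSystem S D Ω F k‖ + 2 * ∑ l ∈ S, ‖Ω (k - l)‖ * ‖F l‖ := by
  calc ‖D k‖ * ‖F k‖ = ‖truncSystem S D Ω F k + 2 * ∑ l ∈ S, Ω (k - l) * F l‖ := by
        rw [truncSystem_apply, sub_add_cancel, norm_mul]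
    _ ≤ ‖truncSystem S D Ω F k‖ + 2 * ‖∑ l ∈ S, Ω (k - l) * F l‖ := by
        refine (norm_add_le _ _).trans_eq ?_
        rw [norm_mul, Complex.norm_two]
    _ ≤ ‖truncSystem S D Ω F k‖ + 2 * ∑ l ∈ S, ‖Ω (k - l)‖ * ‖F l‖ := by
        gcongr
        exact (norm_sum_le _ _).trans_eq (by simp only [norm_mul])

variable {w : G → ℝ} (hw : ∀ a b, w (a + b) ≤ w a * w b) (hΩ : Summable fun j => ‖Ω j‖ * w j)
include hw hΩ

theorem sum_norm_sub_mul_weight_le (hw0 : ∀ a, 0 ≤ w a) (l : G) :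
    ∑ k ∈ S, ‖Ω (k - l)‖ * w k ≤ (∑' j, ‖Ω j‖ * w j) * w l := by
  classical
  calc ∑ k ∈ S, ‖Ω (k - l)‖ * w k ≤ ∑ k ∈ S, ‖Ω (k - l)‖ * w (k - l) * w l := by
        refine Finset.sum_le_sum fun k _ => ?_
        rw [mul_assoc]
        exact mul_le_mul_of_nonneg_left (by simpa using hw (k - l) l) (norm_nonneg _)
    _ = (∑ j ∈ S.image (· - l), ‖Ω j‖ * w j) * w l := by
        rw [Finset.sum_mul, Finset.sum_image fun a _ b _ h => sub_left_injective h]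
    _ ≤ (∑' j, ‖Ω j‖ * w j) * w l :=
        mul_le_mul_of_nonneg_right
          (hΩ.sum_le_tsum _ fun j _ => mul_nonneg (norm_nonneg _) (hw0 j)) (hw0 l)

theorem sum_convolution_mul_weight_le (hw0 : ∀ a, 0 ≤ w a) (F : G → ℂ) :
    ∑ k ∈ S, (∑ l ∈ S, ‖Ω (k - l)‖ * ‖F l‖) * w k ≤
      (∑' j, ‖Ω j‖ * w j) * ∑ l ∈ S, ‖F l‖ * w l := by
  calc ∑ k ∈ S, (∑ l ∈ S, ‖Ω (k - l)‖ * ‖F l‖) * w k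
        = ∑ l ∈ S, ‖F l‖ * ∑ k ∈ S, ‖Ω (k - l)‖ * w k := by
        simp only [Finset.sum_mul, Finset.mul_sum]
        rw [Finset.sum_comm]
        exact Finset.sum_congr rfl fun l _ => Finset.sum_congr rfl fun k _ => by ring
    _ ≤ ∑ l ∈ S, ‖F l‖ * ((∑' j, ‖Ω j‖ * w j) * w l) :=
        Finset.sum_le_sum fun l _ => mul_le_mul_of_nonneg_left
          (sum_norm_sub_mul_weight_le S Ω hw hΩ hw0 l) (norm_nonneg _)
    _ = (∑' j, ‖Ω j‖ * w j) * ∑ l ∈ S, ‖F l‖ * w l := by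
        rw [Finset.mul_sum]
        exact Finset.sum_congr rfl fun l _ => by ring

theorem sub_mul_sum_le_sum_of_truncSystem_eqOn (hw0 : ∀ a, 0 ≤ w a) {c : ℝ}
    (hD : ∀ k ∈ S, c ≤ ‖D k‖) {F Q : G → ℂ} (hFQ : ∀ k ∈ S, truncSystem S D Ω F k = Q k) :
    (c - 2 * ∑' j, ‖Ω j‖ * w j) * ∑ k ∈ S, ‖F k‖ * w k ≤ ∑ k ∈ S, ‖Q k‖ * w k := by
  have hpointwise : ∀ k ∈ S, c * (‖F k‖ * w k) ≤
      ‖Q k‖ * w k + 2 * ((∑ l ∈ S, ‖Ω (k - l)‖ * ‖F l‖) * w k) := by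
    intro k hk
    calc c * (‖F k‖ * w k) ≤ ‖D k‖ * ‖F k‖ * w k := by
          rw [← mul_assoc]
          exact mul_le_mul_of_nonneg_right
            (mul_le_mul_of_nonneg_right (hD k hk) (norm_nonneg _)) (hw0 k)
      _ ≤ (‖Q k‖ + 2 * ∑ l ∈ S, ‖Ω (k - l)‖ * ‖F l‖) * w k := by
          rw [← hFQ k hk]
          exact mul_le_mul_of_nonneg_right (norm_mul_le_norm_truncSystem_add S D Ω F k) (hw0 k)
      _ = _ := by ring
  have hsum := Finset.sum_le_sum hpointwise
  rw [← Finset.mul_sum, Finset.sum_add_distrib, ← Finset.mul_sum] at hsum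
  linarith [sum_convolution_mul_weight_le S Ω hw hΩ hw0 F]

theorem eqOn_zero_of_truncSystem_eqOn_zero (hw_pos : ∀ a, 0 < w a) {c : ℝ}
    (hD : ∀ k ∈ S, c ≤ ‖D k‖) (hc : 2 * ∑' j, ‖Ω j‖ * w j < c) {F : G → ℂ}
    (hF : ∀ k ∈ S, truncSystem S D Ω F k = 0) : ∀ k ∈ S, F k = 0 := by
  have hterm_nonneg : ∀ k ∈ S, 0 ≤ ‖F k‖ * w k := fun k _ =>
    mul_nonneg (norm_nonneg _) (hw_pos k).le
  have hestimate := sub_mul_sum_le_sum_of_truncSystem_eqOn S D Ω hw hΩ (fun a => (hw_pos a).le)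
    hD (Q := 0) hF
  simp only [Pi.zero_apply, norm_zero, zero_mul, Finset.sum_const_zero] at hestimate
  have hsum_zero : ∑ k ∈ S, ‖F k‖ * w k = 0 :=
    le_antisymm (nonpos_of_mul_nonpos_right hestimate (by linarith))
      (Finset.sum_nonneg hterm_nonneg)
  intro k hk
  have hk0 := (Finset.sum_eq_zero_iff_of_nonneg hterm_nonneg).mp hsum_zero k hk
  simpa [(hw_pos k).ne'] using hk0

theorem eq_of_truncSystem_eqOn (hw_pos : ∀ a, 0 < w a) {c : ℝ} (hD : ∀ k ∈ S, c ≤ ‖D k‖)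
    (hc : 2 * ∑' j, ‖Ω j‖ * w j < c) {F F' : G → ℂ} (hF : ∀ k ∉ S, F k = 0)
    (hF' : ∀ k ∉ S, F' k = 0) (hFF' : ∀ k ∈ S, truncSystem S D Ω F k = truncSystem S D Ω F' k) :
    F = F' := by
  have hdiff := eqOn_zero_of_truncSystem_eqOn_zero S D Ω hw hΩ hw_pos hD hc (F := F - F')
    fun k hk => by rw [map_sub, Pi.sub_apply, hFF' k hk, sub_self]
  funext k
  by_cases hk : k ∈ S
  · exact sub_eq_zero.mp (hdiff k hk)
  · rw [hF k hk, hF' k hk]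

theorem exists_truncSystem_eqOn (hw_pos : ∀ a, 0 < w a) {c : ℝ} (hD : ∀ k ∈ S, c ≤ ‖D k‖)
    (hc : 2 * ∑' j, ‖Ω j‖ * w j < c) (Q : G → ℂ) :
    ∃ F : G → ℂ, (∀ k ∉ S, F k = 0) ∧ ∀ k ∈ S, truncSystem S D Ω F k = Q k := by
  let extend : (S → ℂ) →ₗ[ℂ] (G → ℂ) := Function.ExtendByZero.linearMap ℂ Subtype.val
  let restrict : (G → ℂ) →ₗ[ℂ] (S → ℂ) := LinearMap.funLeft ℂ ℂ Subtype.val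
  have hextend : ∀ f, ∀ k ∉ S, extend f k = 0 := fun f k hk =>
    Function.extend_apply' _ _ _ fun ⟨a, ha⟩ => hk (ha ▸ a.2)
  have hinj : Function.Injective (restrict ∘ₗ truncSystem S D Ω ∘ₗ extend) := by
    refine (injective_iff_map_eq_zero _).mpr fun f hf => ?_
    have hzero := eq_of_truncSystem_eqOn S D Ω hw hΩ hw_pos hD hc (hextend f)
      (F' := 0) (fun _ _ => rfl)
      fun k hk => by rw [map_zero]; exact congr_fun hf ⟨k, hk⟩
    funext k
    simpa [extend] using congr_fun hzero k
  obtain ⟨f, hf⟩ := LinearMap.injective_iff_surjective.mp hinj (restrict Q)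
  exact ⟨extend f, hextend f, fun k hk => congr_fun hf ⟨k, hk⟩⟩

end TruncatedSystem

theorem finite_setOf_sum_abs_le (d : ℕ) (K : ℤ) : {k : Fin d → ℤ | ∑ j, |k j| ≤ K}.Finite := by
  refine (Set.finite_Icc (fun _ => -K) fun _ => K).subset fun k hk => ?_
  have hkj (j : Fin d) : |k j| ≤ K :=
    (Finset.single_le_sum (fun i _ => abs_nonneg (k i)) (Finset.mem_univ j)).trans hk
  exact ⟨fun j => neg_le_of_abs_le (hkj j), fun j => le_of_abs_le (hkj j)⟩

theorem exp_sum_abs_add_mul_le {d : ℕ} {r : ℝ} (hr : 0 ≤ r) (a b : Fin d → ℤ) :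
    Real.exp (((∑ i, |(a + b) i| : ℤ) : ℝ) * r) ≤
      Real.exp (((∑ i, |a i| : ℤ) : ℝ) * r) * Real.exp (((∑ i, |b i| : ℤ) : ℝ) * r) := by
  rw [← Real.exp_add, ← add_mul, Real.exp_le_exp]
  gcongr
  exact_mod_cast (Finset.sum_le_sum fun i _ => abs_add_le (a i) (b i)).trans_eq
    Finset.sum_add_distrib

theorem high_mode_homological_system_general (d : ℕ) (K : ℕ)
    (rt N δ₀ : ℝ) (hrt : 0 < rt) (hN : 0 < N) (hδ₀' : δ₀ ≤ 1 / 8)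
    (ω : Fin d → ℝ) (Ωb : ℝ)
    (hdiv : ∀ k : Fin d → ℤ, (∑ j, |k j|) ≤ (K : ℤ) →
      N / 2 ≤ |(∑ j, (k j : ℝ) * ω j) - 2 * Ωb|)
    (Ωt : (Fin d → ℤ) → ℂ)
    (hΩtSum : Summable fun j : Fin d → ℤ =>
      ‖Ωt j‖ * Real.exp (((∑ i, |j i| : ℤ) : ℝ) * rt))
    (hΩtBd : (∑' j : Fin d → ℤ,
      ‖Ωt j‖ * Real.exp (((∑ i, |j i| : ℤ) : ℝ) * rt)) ≤ N * δ₀)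
    (P : (Fin d → ℤ) → ℂ)
    (hPsupp : ∀ k : Fin d → ℤ, ¬((∑ j, |k j|) ≤ (K : ℤ)) → P k = 0) :
    ∃ F : (Fin d → ℤ) → ℂ,
      (∀ k : Fin d → ℤ, ¬((∑ j, |k j|) ≤ (K : ℤ)) → F k = 0) ∧
      (∀ k : Fin d → ℤ, (∑ j, |k j|) ≤ (K : ℤ) →
        ((((∑ j, (k j : ℝ) * ω j) - 2 * Ωb : ℝ)) : ℂ) * F k -
            2 * ∑' l : Fin d → ℤ, Ωt (k - l) * F l
          = Complex.I * P k) ∧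
      (∀ F' : (Fin d → ℤ) → ℂ,
        (∀ k : Fin d → ℤ, ¬((∑ j, |k j|) ≤ (K : ℤ)) → F' k = 0) →
        (∀ k : Fin d → ℤ, (∑ j, |k j|) ≤ (K : ℤ) →
          ((((∑ j, (k j : ℝ) * ω j) - 2 * Ωb : ℝ)) : ℂ) * F' k -
              2 * ∑' l : Fin d → ℤ, Ωt (k - l) * F' l
            = Complex.I * P k) →
        F' = F) ∧
      Summable (fun k : Fin d → ℤ =>
        ‖F k‖ * Real.exp (((∑ j, |k j| : ℤ) : ℝ) * rt)) ∧
      (∑' k : Fin d → ℤ, ‖F k‖ * Real.exp (((∑ j, |k j| : ℤ) : ℝ) * rt))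
        ≤ (4 / N) *
          ∑' k : Fin d → ℤ, ‖P k‖ * Real.exp (((∑ j, |k j| : ℤ) : ℝ) * rt) := by
  set S := (finite_setOf_sum_abs_le d K).toFinset
  have hS (k : Fin d → ℤ) : k ∈ S ↔ (∑ j, |k j|) ≤ (K : ℤ) := Set.Finite.mem_toFinset _
  set D : (Fin d → ℤ) → ℂ := fun k => (((∑ j, (k j : ℝ) * ω j) - 2 * Ωb : ℝ) : ℂ)
  have hD : ∀ k ∈ S, N / 2 ≤ ‖D k‖ := fun k hk => by
    rw [Complex.norm_real, Real.norm_eq_abs]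
    exact hdiv k ((hS k).mp hk)
  have hw_pos := fun k : Fin d → ℤ => Real.exp_pos (((∑ j, |k j| : ℤ) : ℝ) * rt)
  have hw := exp_sum_abs_add_mul_le hrt.le (d := d)
  have hc : N / 4 ≤ N / 2 - 2 * ∑' j, ‖Ωt j‖ * Real.exp (((∑ i, |j i| : ℤ) : ℝ) * rt) := by
    nlinarith
  have hsolves {F : (Fin d → ℤ) → ℂ} (hF : ∀ k, ¬(∑ j, |k j|) ≤ (K : ℤ) → F k = 0)
      (k : Fin d → ℤ) : truncSystem S D Ωt F k =
        ((((∑ j, (k j : ℝ) * ω j) - 2 * Ωb : ℝ)) : ℂ) * F k - 2 * ∑' l, Ωt (k - l) * F l :=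
    truncSystem_apply_eq_tsum S D Ωt (fun l hl => hF l ((hS l).not.mp hl)) k
  obtain ⟨F, hFS, hF⟩ := exists_truncSystem_eqOn S D Ωt hw hΩtSum hw_pos hD (by linarith)
    fun k => Complex.I * P k
  have hFsupp : ∀ k, ¬(∑ j, |k j|) ≤ (K : ℤ) → F k = 0 := fun k hk => hFS k ((hS k).not.mpr hk)
  have hvanish {Q : (Fin d → ℤ) → ℂ} (hQ : ∀ k, ¬(∑ j, |k j|) ≤ (K : ℤ) → Q k = 0) :
      ∀ k ∉ S, ‖Q k‖ * Real.exp (((∑ j, |k j| : ℤ) : ℝ) * rt) = 0 := fun k hk => by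
    rw [hQ k ((hS k).not.mp hk), norm_zero, zero_mul]
  refine ⟨F, hFsupp, fun k hk => ?_, fun F' hF'supp hF' => ?_,
    summable_of_ne_finset_zero (hvanish hFsupp), ?_⟩
  · rw [← hsolves hFsupp]
    exact hF k ((hS k).mpr hk)
  · refine eq_of_truncSystem_eqOn S D Ωt hw hΩtSum hw_pos hD (by linarith)
      (fun k hk => hF'supp k ((hS k).not.mp hk)) hFS fun k hk => ?_
    rw [hsolves hF'supp, hF' k ((hS k).mp hk), hF k hk]
  · have hestimate := sub_mul_sum_le_sum_of_truncSystem_eqOn S D Ωt hw hΩtSum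
      (fun k => (hw_pos k).le) hD hF
    simp only [norm_mul, Complex.norm_I, one_mul] at hestimate
    rw [tsum_eq_sum (hvanish hFsupp), tsum_eq_sum (hvanish hPsupp), div_mul_eq_mul_div,
      le_div_iff₀ hN]
    nlinarith [Finset.sum_nonneg fun k (_ : k ∈ S) => mul_nonneg (norm_nonneg (F k)) (hw_pos k).le]

/-- the high-mode truncated homological equation in Fourier form: the
linear system `(⟨k,ω⟩ − 2Ω̄)F_k − 2Σ_{|l|≤K} Ω̃_{k−l}F_l = iP_k` (`|k| ≤ K`), with
divisors `|⟨k,ω⟩ − 2Ω̄| ≥ N/2` and a small perturbation `Ω̃`, has a unique solution,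
satisfying `Σ_{|k|≤K}|F_k|e^{|k|r̃} ≤ (4/N) Σ_{|k|≤K}|P_k|e^{|k|r̃}`. -/
theorem high_mode_homological_system (d : ℕ) (hd : 1 ≤ d) (K : ℕ)
    (rt N δ₀ : ℝ) (hrt : 0 < rt) (hN : 0 < N) (hδ₀ : 0 < δ₀) (hδ₀' : δ₀ ≤ 1 / 8)
    (ω : Fin d → ℝ) (Ωb : ℝ)
    (hdiv : ∀ k : Fin d → ℤ, (∑ j, |k j|) ≤ (K : ℤ) →
      N / 2 ≤ |(∑ j, (k j : ℝ) * ω j) - 2 * Ωb|)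
    (Ωt : (Fin d → ℤ) → ℂ) (hΩt0 : Ωt 0 = 0)
    (hΩtSum : Summable fun j : Fin d → ℤ =>
      ‖Ωt j‖ * Real.exp (((∑ i, |j i| : ℤ) : ℝ) * rt))
    (hΩtBd : (∑' j : Fin d → ℤ,
      ‖Ωt j‖ * Real.exp (((∑ i, |j i| : ℤ) : ℝ) * rt)) ≤ N * δ₀)
    (P : (Fin d → ℤ) → ℂ)
    (hPsupp : ∀ k : Fin d → ℤ, ¬((∑ j, |k j|) ≤ (K : ℤ)) → P k = 0) :
    ∃ F : (Fin d → ℤ) → ℂ,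
      (∀ k : Fin d → ℤ, ¬((∑ j, |k j|) ≤ (K : ℤ)) → F k = 0) ∧
      (∀ k : Fin d → ℤ, (∑ j, |k j|) ≤ (K : ℤ) →
        ((((∑ j, (k j : ℝ) * ω j) - 2 * Ωb : ℝ)) : ℂ) * F k -
            2 * ∑' l : Fin d → ℤ, Ωt (k - l) * F l
          = Complex.I * P k) ∧
      (∀ F' : (Fin d → ℤ) → ℂ,
        (∀ k : Fin d → ℤ, ¬((∑ j, |k j|) ≤ (K : ℤ)) → F' k = 0) →
        (∀ k : Fin d → ℤ, (∑ j, |k j|) ≤ (K : ℤ) →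
          ((((∑ j, (k j : ℝ) * ω j) - 2 * Ωb : ℝ)) : ℂ) * F' k -
              2 * ∑' l : Fin d → ℤ, Ωt (k - l) * F' l
            = Complex.I * P k) →
        F' = F) ∧
      Summable (fun k : Fin d → ℤ =>
        ‖F k‖ * Real.exp (((∑ j, |k j| : ℤ) : ℝ) * rt)) ∧
      (∑' k : Fin d → ℤ, ‖F k‖ * Real.exp (((∑ j, |k j| : ℤ) : ℝ) * rt))
        ≤ (4 / N) *
          ∑' k : Fin d → ℤ, ‖P k‖ * Real.exp (((∑ j, |k j| : ℤ) : ℝ) * rt) :=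
  high_mode_homological_system_general d K rt N δ₀ hrt hN hδ₀' ω Ωb hdiv Ωt hΩtSum hΩtBd P hPsupp
end

section
/- Let β' ∈ (0, 1/4] and κ = 4/3 − β'/3 (so that κ − 1 = (1−β')/3 and κ ≥ 5/4). Let (B_ν)_{ν≥0} be a nondecreasing sequence of reals with B_ν ≥ 1 and ln B_ν ≤ A + Bν for some constants A, B ≥ 0. Then: (i) the infinite product Π := ∏_{μ=0}^∞ B_μ^{1/(3κ^{μ+1})} converges; (ii) for every δ₀ ∈ (0,1] and every 0 < ε₀ ≤ (δ₀/80)^{1/(1−β')} Π^{−1}, the sequence ε_ν := (ε₀ ∏_{μ=0}^{ν−1} B_μ^{1/(3κ^{μ+1})})^{κ^ν} satisfies ε_ν^{1−β'} B_ν ≤ (δ₀/80)^{κ^ν} ≤ δ₀/2^{ν+6} for every ν ≥ 0. -/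
/-!
Writing `B_μ ^ (1 / (3κ^{μ+1})) = exp a_μ` with `a_μ = log B_μ / (3κ^{μ+1})`, the linear growth of
`log B_μ` against the geometric decay of `κ^{-μ}` makes `∑ a_μ` converge, so `Π = exp (∑ a_μ)`.
The smallness condition on `ε₀` then says `ε₀ ∏_{μ<ν} exp a_μ ≤ (δ₀/80)^{1/(1-β')} exp (-T_ν)`
with `T_ν = ∑_{μ≥ν} a_μ`, and monotonicity of `B` bounds that tail below by the geometric series
`log B_ν / (3κ^{ν+1}) · κ/(κ-1) = log B_ν / ((1-β') κ^ν)`, since `3(κ-1) = 1-β'`.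
Hence raising to the power `(1-β') κ^ν` absorbs the factor `B_ν` exactly.
-/

open Real Finset

theorem summable_mul_geometric_of_le_linear {f : ℕ → ℝ} {r A C : ℝ} (hf : ∀ n, 0 ≤ f n)
    (hfA : ∀ n, f n ≤ A + C * n) (hr0 : 0 ≤ r) (hr1 : r < 1) :
    Summable (fun n => f n * r ^ n) := by
  have hgeom : Summable (fun n : ℕ => r ^ n) := summable_geometric_of_lt_one hr0 hr1
  have harith : Summable (fun n : ℕ => (n : ℝ) * r ^ n) := by
    simpa using summable_pow_mul_geometric_of_norm_lt_one 1 (by rwa [Real.norm_of_nonneg hr0])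
  refine Summable.of_nonneg_of_le (fun n => mul_nonneg (hf n) (pow_nonneg hr0 n)) (fun n => ?_)
    ((hgeom.mul_left A).add (harith.mul_left C))
  calc f n * r ^ n ≤ (A + C * n) * r ^ n := mul_le_mul_of_nonneg_right (hfA n) (pow_nonneg hr0 n)
    _ = A * r ^ n + C * (n * r ^ n) := by ring

section GeometricWeights

variable {κ : ℝ} {g : ℕ → ℝ}

theorem summable_div_three_mul_pow_succ {A C : ℝ} (hκ : 1 < κ) (hg : ∀ μ, 0 ≤ g μ)
    (hgA : ∀ μ, g μ ≤ A + C * μ) :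
    Summable (fun μ => g μ / (3 * κ ^ (μ + 1))) := by
  have hκ0 : 0 < κ := one_pos.trans hκ
  refine ((summable_mul_geometric_of_le_linear hg hgA (inv_nonneg.2 hκ0.le)
    (inv_lt_one_of_one_lt₀ hκ)).div_const (3 * κ)).congr fun μ => ?_
  rw [inv_pow, pow_succ]
  field_simp

theorem le_mul_tsum_nat_add_div_three_mul_pow_succ (hκ : 1 < κ) (hg : Monotone g)
    (hsum : Summable (fun μ => g μ / (3 * κ ^ (μ + 1)))) (ν : ℕ) :
    g ν ≤ 3 * (κ - 1) * κ ^ ν * ∑' j, g (j + ν) / (3 * κ ^ (j + ν + 1)) := by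
  have hκ0 : 0 < κ := one_pos.trans hκ
  have hgeom := (hasSum_geometric_of_lt_one (inv_nonneg.2 hκ0.le)
    (inv_lt_one_of_one_lt₀ hκ)).mul_left (g ν / (3 * κ ^ (ν + 1)))
  have htail := ((summable_nat_add_iff ν).2 hsum).hasSum
  have hle := hasSum_le (fun j => ?_) hgeom htail
  · calc g ν = 3 * (κ - 1) * κ ^ ν * (g ν / (3 * κ ^ (ν + 1)) * (1 - κ⁻¹)⁻¹) := by
          have : κ - 1 ≠ 0 := by linarith
          field_simp
          ring
      _ ≤ _ := mul_le_mul_of_nonneg_left hle (by nlinarith [pow_pos hκ0 ν])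
  · calc g ν / (3 * κ ^ (ν + 1)) * κ⁻¹ ^ j = g ν / (3 * κ ^ (j + ν + 1)) := by
          rw [inv_pow, show j + ν + 1 = (ν + 1) + j by ring, pow_add]
          field_simp
          ring
      _ ≤ g (j + ν) / (3 * κ ^ (j + ν + 1)) :=
          div_le_div_of_nonneg_right (hg (Nat.le_add_left ν j)) (by positivity)

end GeometricWeights

theorem mul_prod_range_exp_le {a : ℕ → ℝ} (ha : Summable a) {ε c : ℝ}
    (hε : ε ≤ c * (∏' μ, exp (a μ))⁻¹) (ν : ℕ) :
    ε * ∏ μ ∈ range ν, exp (a μ) ≤ c * exp (-∑' j, a (j + ν)) := by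
  rw [show (∏' μ, exp (a μ)) = exp (∑' μ, a μ) from ha.hasSum.rexp.tprod_eq,
    ← ha.sum_add_tsum_nat_add ν] at hε
  calc ε * ∏ μ ∈ range ν, exp (a μ)
      ≤ c * (exp (∑ μ ∈ range ν, a μ + ∑' j, a (j + ν)))⁻¹ * exp (∑ μ ∈ range ν, a μ) := by
        rw [← exp_sum]
        exact mul_le_mul_of_nonneg_right hε (exp_pos _).le
    _ = c * exp (-∑' j, a (j + ν)) := by
        rw [← exp_neg, mul_assoc, ← exp_add]
        congr 2
        ring

theorem rpow_rpow_mul_le_of_le_mul_exp {x y b p q T : ℝ} (hx : 0 < x) (hy : 0 < y) (hb : 0 < b)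
    (hp : 0 < p) (hq : 0 ≤ q) (hxy : x ≤ y ^ (1 / p) * exp (-T)) (hbT : log b ≤ p * q * T) :
    (x ^ q) ^ p * b ≤ y ^ q := by
  have hlogx : log x ≤ log y / p - T := by
    have := log_le_log hx hxy
    rwa [log_mul (by positivity) (exp_pos _).ne', log_rpow hy, log_exp, one_div_mul_eq_div,
      ← sub_eq_add_neg] at this
  rw [← log_le_log_iff (by positivity) (by positivity), log_mul (by positivity) hb.ne',
    log_rpow (by positivity), log_rpow hx, log_rpow hy]
  calc p * (q * log x) + log b ≤ p * q * (log y / p - T) + p * q * T := by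
        nlinarith [mul_le_mul_of_nonneg_left hlogx (mul_nonneg hp.le hq)]
    _ = q * log y := by field_simp; ring

theorem two_pow_add_six_le_eighty_rpow {κ : ℝ} (hκ : 5 / 4 ≤ κ) (ν : ℕ) :
    (2 : ℝ) ^ (ν + 6) ≤ 80 ^ (κ ^ ν) := by
  have hbernoulli : (ν : ℝ) + 6 ≤ 6 * κ ^ ν := by
    have h1 := one_add_mul_le_pow (by norm_num : (-2 : ℝ) ≤ 1 / 4) ν
    have h2 := pow_le_pow_left₀ (by norm_num) hκ ν
    norm_num at h1
    linarith
  calc (2 : ℝ) ^ (ν + 6) = 2 ^ ((ν : ℝ) + 6) := by norm_cast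
    _ ≤ 2 ^ (6 * κ ^ ν) := rpow_le_rpow_of_exponent_le one_le_two hbernoulli
    _ = 64 ^ (κ ^ ν) := by rw [rpow_mul zero_le_two]; norm_num
    _ ≤ 80 ^ (κ ^ ν) := rpow_le_rpow (by norm_num) (by norm_num) (by positivity)

theorem div_eighty_rpow_le_div_two_pow {δ κ : ℝ} (hδ0 : 0 < δ) (hδ1 : δ ≤ 1) (hκ : 5 / 4 ≤ κ)
    (ν : ℕ) : (δ / 80) ^ (κ ^ ν) ≤ δ / 2 ^ (ν + 6) := by
  rw [div_rpow hδ0.le (by norm_num)]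
  have hδ : δ ^ (κ ^ ν) ≤ δ := by
    simpa using rpow_le_rpow_of_exponent_ge hδ0 hδ1 (one_le_pow₀ (by linarith : (1 : ℝ) ≤ κ))
  exact div_le_div₀ hδ0.le hδ (by positivity) (two_pow_add_six_le_eighty_rpow hκ ν)

theorem kam_smallness_bookkeeping_general (β' : ℝ) (hβ'1 : β' ≤ 1 / 4)
    (κ : ℝ) (hκ : κ = 4 / 3 - β' / 3)
    (B : ℕ → ℝ) (hB1 : ∀ ν, 1 ≤ B ν) (hBmono : Monotone B)
    (A C : ℝ)
    (hBgrow : ∀ ν : ℕ, Real.log (B ν) ≤ A + C * ν) :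
    Multipliable (fun μ : ℕ => B μ ^ (1 / (3 * κ ^ (μ + 1)))) ∧
    ∀ δ₀ : ℝ, 0 < δ₀ → δ₀ ≤ 1 →
      ∀ ε₀ : ℝ, 0 < ε₀ →
        ε₀ ≤ (δ₀ / 80) ^ (1 / (1 - β')) *
          (∏' μ : ℕ, B μ ^ (1 / (3 * κ ^ (μ + 1))))⁻¹ →
        ∀ ν : ℕ,
          ((ε₀ * ∏ μ ∈ Finset.range ν, B μ ^ (1 / (3 * κ ^ (μ + 1)))) ^ (κ ^ ν)) ^ (1 - β') *
              B ν ≤ (δ₀ / 80) ^ (κ ^ ν) ∧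
          (δ₀ / 80) ^ (κ ^ ν) ≤ δ₀ / 2 ^ (ν + 6) := by
  have hκ54 : 5 / 4 ≤ κ := by rw [hκ]; linarith
  have hκ1 : 1 < κ := by linarith
  have hBpos ν : 0 < B ν := one_pos.trans_le (hB1 ν)
  have hlogB : Monotone fun μ => log (B μ) := fun m n h => log_le_log (hBpos m) (hBmono h)
  have ha := summable_div_three_mul_pow_succ hκ1 (fun μ => log_nonneg (hB1 μ)) hBgrow
  have hexp : (fun μ : ℕ => B μ ^ (1 / (3 * κ ^ (μ + 1)))) =
      fun μ => exp (log (B μ) / (3 * κ ^ (μ + 1))) :=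
    funext fun μ => by rw [rpow_def_of_pos (hBpos μ), mul_one_div]
  simp only [hexp]
  refine ⟨ha.hasSum.rexp.multipliable, fun δ₀ hδ0 hδ1 ε₀ hε0 hε ν =>
    ⟨?_, div_eighty_rpow_le_div_two_pow hδ0 hδ1 hκ54 ν⟩⟩
  refine rpow_rpow_mul_le_of_le_mul_exp (by positivity) (by positivity) (hBpos ν) (by linarith)
    (by positivity) (mul_prod_range_exp_le ha hε ν) ?_
  rw [show 1 - β' = 3 * (κ - 1) by rw [hκ]; ring]
  exact le_mul_tsum_nat_add_div_three_mul_pow_succ hκ1 hlogB ha ν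

/-- bookkeeping of the KAM smallness constants: with
`κ = 4/3 − β'/3`, the product `Π = ∏ B_μ^{1/(3κ^{μ+1})}` converges, and if
`ε₀ ≤ (δ₀/80)^{1/(1−β')} Π⁻¹` then `ε_ν^{1−β'} B_ν ≤ (δ₀/80)^{κ^ν} ≤ δ₀/2^{ν+6}`. -/
theorem kam_smallness_bookkeeping (β' : ℝ) (hβ'0 : 0 < β') (hβ'1 : β' ≤ 1 / 4)
    (κ : ℝ) (hκ : κ = 4 / 3 - β' / 3)
    (B : ℕ → ℝ) (hB1 : ∀ ν, 1 ≤ B ν) (hBmono : Monotone B)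
    (A C : ℝ) (hA : 0 ≤ A) (hC : 0 ≤ C)
    (hBgrow : ∀ ν : ℕ, Real.log (B ν) ≤ A + C * ν) :
    Multipliable (fun μ : ℕ => B μ ^ (1 / (3 * κ ^ (μ + 1)))) ∧
    ∀ δ₀ : ℝ, 0 < δ₀ → δ₀ ≤ 1 →
      ∀ ε₀ : ℝ, 0 < ε₀ →
        ε₀ ≤ (δ₀ / 80) ^ (1 / (1 - β')) *
          (∏' μ : ℕ, B μ ^ (1 / (3 * κ ^ (μ + 1))))⁻¹ →
        ∀ ν : ℕ,
          ((ε₀ * ∏ μ ∈ Finset.range ν, B μ ^ (1 / (3 * κ ^ (μ + 1)))) ^ (κ ^ ν)) ^ (1 - β') *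
              B ν ≤ (δ₀ / 80) ^ (κ ^ ν) ∧
          (δ₀ / 80) ^ (κ ^ ν) ≤ δ₀ / 2 ^ (ν + 6) :=
  kam_smallness_bookkeeping_general β' hβ'1 κ hκ B hB1 hBmono A C hBgrow
end
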